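/- arXiv:1901.08575 — 5 statements merged into one kernel-verified Lean document; each statement's English description precedes it below -/
import Mathlib

section
/- Let m be a nonempty finite word over the four unit directions of ℤ² such that the walk following m·m starting at the origin is self-avoiding. Then the bi-infinite walk ⋯m·m·m⋯ (infinitely many copies of m in both directions) through the origin is self-avoiding, i.e., for all integers i ≠ j and all positions s, t within one copy of m with (i,s) ≠ (j,t), the corresponding lattice points i·⟨m⟩ + partial-sum differ, where ⟨m⟩ is the displacement vector of m. -/
/-- The four unit directions of ℤ². -/
def Dir : Set (ℤ × ℤ) := {(1,0), (0,1), (0,-1), (-1,0)}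

/-- Partial sum of the first `n` letters of a word: the `n`-th point of the walk from 0. -/
def psum (m : List (ℤ × ℤ)) (n : ℕ) : ℤ × ℤ := (m.take n).sum

/-- A word is self-avoiding (a free path) if the walk from the origin visits no point twice. -/
def SelfAvoiding (m : List (ℤ × ℤ)) : Prop :=
  Function.Injective fun n : Fin (m.length + 1) => psum m n

/-!
Write `v = ⟨m⟩`. If two points of `⋯mmm⋯` coincide, two points of `m` are congruent modulo `v`.
A shortest such gap is a subpath `p₀, …, p_g` with `p_g = p₀ + K • v` and `p₀, …, p_{g-1}`
pairwise incongruent: a simple closed lattice loop on the cylinder `ℤ² ⧸ ℤ v` winding `K` times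
around it. Self-avoidance of `mm` excludes `K ∈ {-1, 0, 1}`.

But a simple loop on the cylinder winds at most once. After a lattice symmetry, `v.1 > 0`; the
winding number around a unit cell, counted by signed crossings with the downward ray from the
cell, is then `0` far below the loop and `K` far above it. It jumps only across edges of the
loop, and a local check at each vertex (a discrete Jordan curve theorem) shows that it is a
constant `λ` on the left of the loop and `λ - 1` on its right. Along a vertical line it therefore
only moves between `λ - 1` and `λ`, so `|K| ≤ 1`.
-/

open AddCommGroup

noncomputable section

open Classical

lemma Int.ediv_sub_sub_one_ediv {a b : ℤ} (hb : 0 < b) :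
    a / b - (a - 1) / b = if b ∣ a then 1 else 0 := by
  have hr := Int.emod_nonneg a hb.ne'
  have hr' := Int.emod_lt_of_pos a hb
  have hdiv := Int.emod_add_mul_ediv a b
  split_ifs with hd
  · have h0 := Int.emod_eq_zero_of_dvd hd
    have : (a - 1) / b = a / b - 1 := ((Int.ediv_emod_unique (r := b - 1) hb).2
      ⟨by linear_combination hdiv - h0, by omega, by omega⟩).1
    omega
  · have h0 : a % b ≠ 0 := fun h => hd (Int.dvd_of_emod_eq_zero h)
    have : (a - 1) / b = a / b := ((Int.ediv_emod_unique (r := a % b - 1) hb).2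
      ⟨by linear_combination hdiv, by omega, by omega⟩).1
    omega

lemma Int.exists_mem_range_modEq {N : ℕ} (hN : 0 < N) (n : ℤ) :
    ∃ r ∈ Finset.range N, (r : ℤ) ≡ n [ZMOD N] := by
  refine ⟨(n % N).toNat, ?_, ?_⟩
  · have := Int.emod_lt_of_pos n (by omega : (0 : ℤ) < N)
    rw [Finset.mem_range]
    omega
  · rw [Int.toNat_of_nonneg (Int.emod_nonneg _ (by omega))]
    exact Int.mod_modEq n _

lemma Int.eq_of_modEq_of_mem_range {N m r : ℕ} (hm : m ∈ Finset.range N)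
    (hr : r ∈ Finset.range N) (h : (m : ℤ) ≡ r [ZMOD N]) : m = r :=
  (Int.natCast_modEq_iff.1 h).eq_of_lt_of_lt (Finset.mem_range.1 hm) (Finset.mem_range.1 hr)

lemma Int.mem_of_ne_of_jumps_mem {g : ℤ → ℤ} {T : Set ℤ}
    (hg : ∀ y, g (y + 1) ≠ g y → g y ∈ T ∧ g (y + 1) ∈ T) {a b : ℤ} (hab : a ≤ b)
    (hne : g a ≠ g b) : g a ∈ T ∧ g b ∈ T := by
  induction b, hab using Int.leInduction with
  | base => exact absurd rfl hne
  | succ b _ ih =>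
    by_cases hb : g (b + 1) = g b
    · rw [hb] at hne ⊢
      exact ih hne
    · by_cases ha : g a = g b
      · exact ⟨ha ▸ (hg b hb).1, (hg b hb).2⟩
      · exact ⟨(ih ha).1, (hg b hb).2⟩

/-- Unit cells are named by their lower-left corner. `leftCell p d` is the cell on the left of the
unit step from `p` in direction `d`, and `rightCell p d` the cell on its right. -/
def leftCell (p d : ℤ × ℤ) : ℤ × ℤ := p - ((d.2 - d.1 + 1) / 2, (1 - d.1 - d.2) / 2)

def rightCell (p d : ℤ × ℤ) : ℤ × ℤ := leftCell p (d.2, -d.1)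

/-- A walk enters the vertex `(x, y)` by the step `b`, leaves it by the step `a` and uses no other
edge at `(x, y)`: the four hypotheses say that `w` jumps across each edge at `(x, y)` by the signed
number of times the walk runs along it. -/
lemma leftCell_of_vertex_jumps {w : ℤ × ℤ → ℤ} {x y : ℤ} {a b : ℤ × ℤ} (ha : a ∈ Dir)
    (hb : b ∈ Dir) (hab : b ≠ -a)
    (hN : w (x, y) = w (x - 1, y) + ((if b = (0, -1) then 1 else 0) - if a = (0, 1) then 1 else 0))
    (hE : w (x, y) = w (x, y - 1) + ((if a = (1, 0) then 1 else 0) - if b = (-1, 0) then 1 else 0))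
    (hW : w (x - 1, y) = w (x - 1, y - 1) +
      ((if b = (1, 0) then 1 else 0) - if a = (-1, 0) then 1 else 0))
    (hS : w (x, y - 1) = w (x - 1, y - 1) +
      ((if a = (0, -1) then 1 else 0) - if b = (0, 1) then 1 else 0)) :
    w (leftCell (x, y) a) = w (leftCell ((x, y) - b) b) ∧
      w (leftCell (x, y) a) = w (rightCell (x, y) a) + 1 := by
  simp only [Dir, Set.mem_insert_iff, Set.mem_singleton_iff] at ha hb
  rcases ha with rfl | rfl | rfl | rfl <;> rcases hb with rfl | rfl | rfl | rfl <;>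
    simp [leftCell, rightCell] at hab hN hE hW hS ⊢ <;> omega

section Crossing

variable (v : ℤ × ℤ)

/-- On the cylinder `ℤ² ⧸ ℤ v`, the point `z` lies on the vertical ray going down from `c`. -/
def Below (c z : ℤ × ℤ) : Prop := ∃ j : ℤ, 0 ≤ j ∧ z + (0, j) ≡ c [PMOD v]

/-- The signed crossing, on the cylinder `ℤ² ⧸ ℤ v`, of the unit step from `z` in direction `e`
with the downward ray from the centre of the cell `c`. -/
def crossing (c z e : ℤ × ℤ) : ℤ :=
  (if e = (1, 0) ∧ Below v c z then 1 else 0) - if e = (-1, 0) ∧ Below v c (z + e) then 1 else 0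

/-- The height of `z` above the line `ℝ v`, when `v.1 ∣ z.1`. -/
def height (z : ℤ × ℤ) : ℤ := z.2 - z.1 / v.1 * v.2

variable {v}

lemma below_congr {c c' z : ℤ × ℤ} (h : c ≡ c' [PMOD v]) : Below v c z ↔ Below v c' z :=
  exists_congr fun _ => and_congr_right fun _ => ⟨fun h' => h'.trans h, fun h' => h'.trans h.symm⟩

lemma below_add_add {c z : ℤ × ℤ} (u : ℤ × ℤ) : Below v (c + u) (z + u) ↔ Below v c z := by
  refine exists_congr fun j => and_congr_right fun _ => ?_
  rw [add_right_comm]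
  exact ⟨ModEq.add_right_cancel' u, ModEq.add_right u⟩

lemma below_add_iff {c z : ℤ × ℤ} (u : ℤ × ℤ) : Below v c (z + u) ↔ Below v (c - u) z := by
  rw [← below_add_add (c := c - u) u, sub_add_cancel]

lemma below_add_zsmul {c z : ℤ × ℤ} (t : ℤ) : Below v c (z + t • v) ↔ Below v c z := by
  rw [below_add_iff, sub_eq_add_neg, ← neg_zsmul]
  exact below_congr (add_zsmul_modEq _)

lemma add_vertical_add (z : ℤ × ℤ) (i j : ℤ) : z + (0, i) + (0, j) = z + (0, i + j) := by
  ext <;> simp [add_assoc]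

lemma eq_of_add_vertical_modEq (hv : v.1 ≠ 0) {z : ℤ × ℤ} {i j : ℤ}
    (h : z + (0, i) ≡ z + (0, j) [PMOD v]) : i = j := by
  obtain ⟨m, hm⟩ := modEq_iff_zsmul'.1 h
  have h1 := congrArg Prod.fst hm
  have h2 := congrArg Prod.snd hm
  simp only [add_sub_add_left_eq_sub, Prod.fst_sub, Prod.snd_sub, Prod.smul_fst, Prod.smul_snd,
    smul_eq_mul, sub_self, zero_eq_mul] at h1 h2
  rcases h1 with rfl | h1
  · linarith
  · exact absurd h1 hv

lemma below_add_snd_iff {x y : ℤ} {z : ℤ × ℤ} :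
    Below v (x, y + 1) z ↔ Below v (x, y) z ∨ z ≡ (x, y + 1) [PMOD v] := by
  constructor
  · rintro ⟨j, hj, h⟩
    rcases hj.eq_or_lt with rfl | hj
    · simpa [Prod.mk_zero_zero] using Or.inr h
    · refine Or.inl ⟨j - 1, by omega, ModEq.add_right_cancel' (0, 1) ?_⟩
      simpa [add_vertical_add] using h
  · rintro (⟨j, hj, h⟩ | h)
    · exact ⟨j + 1, by omega, by simpa [add_vertical_add] using h.add_right (0, 1)⟩
    · exact ⟨0, le_rfl, by simpa [Prod.mk_zero_zero] using h⟩

lemma ite_below_add_snd (hv : v.1 ≠ 0) (x y : ℤ) (z : ℤ × ℤ) :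
    (if Below v (x, y + 1) z then 1 else 0 : ℤ) =
      (if Below v (x, y) z then 1 else 0) + if z ≡ (x, y + 1) [PMOD v] then 1 else 0 := by
  have hexcl : ¬ (Below v (x, y) z ∧ z ≡ (x, y + 1) [PMOD v]) := by
    rintro ⟨⟨j, hj, h⟩, h'⟩
    have h'' : z + (0, j + 1) ≡ z + (0, 0) [PMOD v] := by
      simpa [← add_vertical_add, Prod.mk_zero_zero] using
        (h.add_right (0, 1)).trans (by simpa using h'.symm)
    have := eq_of_add_vertical_modEq hv h''
    omega
  rw [below_add_snd_iff]
  split_ifs <;> tauto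

lemma crossing_add_snd (hv : v.1 ≠ 0) (x y : ℤ) (z e : ℤ × ℤ) :
    crossing v (x, y + 1) z e = crossing v (x, y) z e +
      ((if e = (1, 0) ∧ z ≡ (x, y + 1) [PMOD v] then 1 else 0) -
        if e = (-1, 0) ∧ z ≡ (x + 1, y + 1) [PMOD v] then 1 else 0) := by
  unfold crossing
  by_cases hE : e = (1, 0)
  · subst hE
    simp [ite_below_add_snd hv]
  by_cases hW : e = (-1, 0)
  · subst hW
    simp [below_add_iff, ite_below_add_snd hv]
    ring
  · simp [hE, hW]

/-- The middle term telescopes along a closed walk. -/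
lemma crossing_add_fst (hv : v.1 ≠ 0) (x y : ℤ) (z : ℤ × ℤ) {e : ℤ × ℤ} (he : e ∈ Dir) :
    crossing v (x + 1, y) z e = crossing v (x, y) z e +
      ((if Below v (x + 1, y) z then 1 else 0) - if Below v (x + 1, y) (z + e) then 1 else 0) +
      ((if e = (0, -1) ∧ z ≡ (x + 1, y + 1) [PMOD v] then 1 else 0) -
        if e = (0, 1) ∧ z ≡ (x + 1, y) [PMOD v] then 1 else 0) := by
  simp only [Dir, Set.mem_insert_iff, Set.mem_singleton_iff] at he
  unfold crossing
  rcases he with rfl | rfl | rfl | rfl <;> simp [below_add_iff]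
  · have := ite_below_add_snd hv (x + 1) (y - 1) z
    simp only [sub_add_cancel] at this
    rw [this]
    ring
  · rw [ite_below_add_snd hv]
    ring
  · ring

lemma below_zero_iff (hv : v.1 ≠ 0) {y : ℤ} {z : ℤ × ℤ} :
    Below v (0, y) z ↔ v.1 ∣ z.1 ∧ height v z ≤ y := by
  simp only [Below, modEq_iff_zsmul', Prod.ext_iff, Prod.fst_sub, Prod.snd_sub, Prod.fst_add,
    Prod.snd_add, Prod.smul_fst, Prod.smul_snd, smul_eq_mul, height]
  constructor
  · rintro ⟨j, hj, m, h1, h2⟩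
    have hq : z.1 / v.1 = -m := by
      rw [show z.1 = -m * v.1 by linarith, Int.mul_ediv_cancel _ hv]
    refine ⟨⟨-m, by linarith⟩, ?_⟩
    rw [hq]
    linarith
  · rintro ⟨⟨q, hq⟩, hy⟩
    rw [hq, Int.mul_ediv_cancel_left _ hv] at hy
    exact ⟨y - (z.2 - q * v.2), by linarith, -q, by rw [hq]; ring, by ring⟩

lemma crossing_eq_zero_of_lt_height (hv : v.1 ≠ 0) {y : ℤ} {z e : ℤ × ℤ} (h : y < height v z)
    (h' : y < height v (z + e)) : crossing v (0, y) z e = 0 := by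
  simp [crossing, below_zero_iff hv, not_le.2 h, not_le.2 h']

/-- High above, the ray from `(0, y)` meets every column `x ≡ 0 [ZMOD v.1]`, and the crossings
count the multiples of `v.1` passed by the step. -/
lemma crossing_eq_of_height_le (hv : 0 < v.1) {y : ℤ} {z e : ℤ × ℤ} (he : e ∈ Dir)
    (h : height v z ≤ y) (h' : height v (z + e) ≤ y) :
    crossing v (0, y) z e = ((z + e).1 - 1) / v.1 - (z.1 - 1) / v.1 := by
  simp only [Dir, Set.mem_insert_iff, Set.mem_singleton_iff] at he
  rcases he with rfl | rfl | rfl | rfl <;>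
    simp_all [crossing, below_zero_iff hv.ne', Int.ediv_sub_sub_one_ediv hv]
  rw [← sub_eq_add_neg, ← Int.ediv_sub_sub_one_ediv hv]
  ring

end Crossing

lemma exists_addEquiv_dir_fst_pos {v : ℤ × ℤ} (hv : v ≠ 0) :
    ∃ σ : ℤ × ℤ ≃+ ℤ × ℤ, (∀ d ∈ Dir, σ d ∈ Dir) ∧ 0 < (σ v).1 := by
  have hneg : ∀ d ∈ Dir, -d ∈ Dir := by
    simp only [Dir, Set.mem_insert_iff, Set.mem_singleton_iff]
    rintro d (rfl | rfl | rfl | rfl) <;> simp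
  have hswap : ∀ d ∈ Dir, d.swap ∈ Dir := by
    simp only [Dir, Set.mem_insert_iff, Set.mem_singleton_iff]
    rintro d (rfl | rfl | rfl | rfl) <;> simp
  rcases lt_trichotomy v.1 0 with h | h | h
  · exact ⟨AddEquiv.neg _, hneg, by simpa using h⟩
  · have h2 : v.2 ≠ 0 := fun h2 => hv (Prod.ext h h2)
    rcases h2.lt_or_gt with h2 | h2
    · exact ⟨(AddEquiv.prodComm).trans (AddEquiv.neg _), fun d hd => hneg _ (hswap d hd),
        by simpa using h2⟩
    · exact ⟨AddEquiv.prodComm, hswap, by simpa using h2⟩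
  · exact ⟨AddEquiv.refl _, fun d hd => hd, h⟩

/-- A closed walk of length `N` on the cylinder `ℤ² ⧸ ℤ v`, lifted to a bi-infinite walk `f` in
`ℤ²`: one period translates it by `k • v`, and `simple` says that it visits no point of the
cylinder twice. -/
structure SimpleCylinderLoop where
  f : ℤ → ℤ × ℤ
  v : ℤ × ℤ
  N : ℕ
  k : ℤ
  v_ne_zero : v ≠ 0
  step_mem : ∀ n, f (n + 1) - f n ∈ Dir
  add_period : ∀ n, f (n + N) = f n + k • v
  simple : ∀ a b, f a ≡ f b [PMOD v] → a ≡ b [ZMOD N]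

namespace SimpleCylinderLoop

variable (γ : SimpleCylinderLoop)

def d (n : ℤ) : ℤ × ℤ := γ.f (n + 1) - γ.f n

lemma d_mem (n : ℤ) : γ.d n ∈ Dir := γ.step_mem n

lemma f_add_d (n : ℤ) : γ.f n + γ.d n = γ.f (n + 1) := add_sub_cancel _ _

lemma f_add_mul (n q : ℤ) : γ.f (n + q * γ.N) = γ.f n + (q * γ.k) • γ.v := by
  induction q using Int.induction_on with
  | zero => simp
  | succ q ih =>
    rw [add_mul, one_mul, ← add_assoc, γ.add_period, ih, add_assoc, ← add_smul, add_one_mul]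
  | pred q ih =>
    have h := γ.add_period (n + (-q - 1) * γ.N)
    rw [show n + (-q - 1) * γ.N + γ.N = n + -q * γ.N by ring, ih] at h
    rw [eq_sub_of_add_eq h.symm]
    module

lemma f_modEq_of_intModEq {a b : ℤ} (h : a ≡ b [ZMOD γ.N]) : γ.f a ≡ γ.f b [PMOD γ.v] := by
  obtain ⟨q, hq⟩ := h.dvd
  rw [show b = a + q * γ.N by linarith, γ.f_add_mul]
  exact (add_zsmul_modEq _).symm

lemma d_eq_of_intModEq {a b : ℤ} (h : a ≡ b [ZMOD γ.N]) : γ.d a = γ.d b := by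
  obtain ⟨q, hq⟩ := h.dvd
  rw [d, d, show b = a + q * γ.N by linarith, add_right_comm, γ.f_add_mul, γ.f_add_mul,
    add_sub_add_right_eq_sub]

lemma f_injective (hk : γ.k ≠ 0) : Function.Injective γ.f := by
  intro a b h
  obtain ⟨q, hq⟩ := (γ.simple b a (h ▸ modEq_rfl)).dvd
  have h' := γ.f_add_mul b q
  rw [show b + q * γ.N = a by linarith, h, left_eq_add, smul_eq_zero] at h'
  rcases h' with h' | h'
  · rcases mul_eq_zero.1 h' with rfl | h'
    · linarith
    · exact absurd h' hk
  · exact absurd h' γ.v_ne_zero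

lemma d_sub_one_ne_neg (hk : γ.k ≠ 0) (n : ℤ) : γ.d (n - 1) ≠ -γ.d n := by
  intro h
  have : γ.f (n + 1) = γ.f (n - 1) := by
    have h' := γ.f_add_d (n - 1)
    rw [sub_add_cancel, h] at h'
    rw [← γ.f_add_d n, ← h']
    abel
  have := γ.f_injective hk this
  omega

lemma N_pos (hk : γ.k ≠ 0) : 0 < γ.N := by
  by_contra h
  have h' := γ.add_period 0
  rw [show γ.N = 0 by omega, Nat.cast_zero, add_zero, left_eq_add, smul_eq_zero] at h'
  exact h'.elim hk γ.v_ne_zero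

def mult (p e : ℤ × ℤ) : ℤ :=
  ∑ n ∈ Finset.range γ.N, if γ.d n = e ∧ γ.f n ≡ p [PMOD γ.v] then 1 else 0

lemma mult_eq_of_modEq (hk : γ.k ≠ 0) {n : ℤ} {p : ℤ × ℤ} (h : γ.f n ≡ p [PMOD γ.v])
    (e : ℤ × ℤ) : γ.mult p e = if γ.d n = e then 1 else 0 := by
  obtain ⟨r, hr, hrn⟩ := Int.exists_mem_range_modEq (γ.N_pos hk) n
  have hfr := (γ.f_modEq_of_intModEq hrn).trans h
  rw [mult, Finset.sum_eq_single_of_mem r hr]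
  · simp [γ.d_eq_of_intModEq hrn, hfr]
  · intro m hm hmr
    rw [if_neg]
    rintro ⟨-, hm'⟩
    exact hmr (Int.eq_of_modEq_of_mem_range hm hr (γ.simple _ _ (hm'.trans hfr.symm)))

lemma mult_eq_of_add_eq (hk : γ.k ≠ 0) {n : ℤ} {p e : ℤ × ℤ} (h : p + e = γ.f n) :
    γ.mult p e = if γ.d (n - 1) = e then 1 else 0 := by
  obtain ⟨r, hr, hrn⟩ := Int.exists_mem_range_modEq (γ.N_pos hk) (n - 1)
  rw [mult, Finset.sum_eq_single_of_mem r hr]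
  · rw [γ.d_eq_of_intModEq hrn]
    by_cases he : γ.d (n - 1) = e
    · have hp : γ.f (n - 1) = p := by
        have h' := γ.f_add_d (n - 1)
        rw [sub_add_cancel, he, ← h] at h'
        exact add_right_cancel h'
      subst hp
      simp [he, γ.f_modEq_of_intModEq hrn]
    · simp [he]
  · intro m hm hmr
    rw [if_neg]
    rintro ⟨hme, hmp⟩
    have hsucc : γ.f (m + 1) ≡ γ.f n [PMOD γ.v] := by
      rw [← γ.f_add_d, hme, ← h]
      exact hmp.add_right e
    have hmn : (m : ℤ) ≡ r [ZMOD γ.N] := by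
      have := (γ.simple _ _ hsucc).sub_right 1
      rw [add_sub_cancel_right] at this
      exact this.trans hrn.symm
    exact hmr (Int.eq_of_modEq_of_mem_range hm hr hmn)

lemma exists_of_mult_ne_zero {p e : ℤ × ℤ} (h : γ.mult p e ≠ 0) :
    ∃ n : ℤ, γ.d n = e ∧ γ.f n ≡ p [PMOD γ.v] := by
  obtain ⟨n, -, hn⟩ := Finset.exists_ne_zero_of_sum_ne_zero h
  exact ⟨n, (ite_ne_right_iff.1 hn).1⟩

def winding (c : ℤ × ℤ) : ℤ := ∑ n ∈ Finset.range γ.N, crossing γ.v c (γ.f n) (γ.d n)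

lemma winding_congr {c c' : ℤ × ℤ} (h : c ≡ c' [PMOD γ.v]) : γ.winding c = γ.winding c' := by
  simp only [winding, crossing, below_congr h]

lemma winding_add_snd (hv : γ.v.1 ≠ 0) (x y : ℤ) :
    γ.winding (x, y + 1) =
      γ.winding (x, y) + (γ.mult (x, y + 1) (1, 0) - γ.mult (x + 1, y + 1) (-1, 0)) := by
  simp only [winding, mult, crossing_add_snd hv, Finset.sum_add_distrib, Finset.sum_sub_distrib]

lemma winding_add_fst (hv : γ.v.1 ≠ 0) (x y : ℤ) :
    γ.winding (x + 1, y) =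
      γ.winding (x, y) + (γ.mult (x + 1, y + 1) (0, -1) - γ.mult (x + 1, y) (0, 1)) := by
  simp only [winding, mult, crossing_add_fst hv _ _ _ (γ.d_mem _), Finset.sum_add_distrib,
    Finset.sum_sub_distrib, γ.f_add_d]
  have htel := Finset.sum_range_sub'
    (fun n : ℕ => (if Below γ.v (x + 1, y) (γ.f n) then 1 else 0 : ℤ)) γ.N
  rw [Finset.sum_sub_distrib] at htel
  push_cast at htel
  rw [← zero_add (γ.N : ℤ), γ.add_period, below_add_zsmul, sub_self] at htel
  rw [htel, add_zero]

lemma winding_eq_zero_of_lt_height (hv : γ.v.1 ≠ 0) {y : ℤ}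
    (h : ∀ n ≤ γ.N, y < height γ.v (γ.f n)) : γ.winding (0, y) = 0 := by
  refine Finset.sum_eq_zero fun n hn => crossing_eq_zero_of_lt_height hv
    (h n (Finset.mem_range.1 hn).le) ?_
  rw [γ.f_add_d]
  exact_mod_cast h (n + 1) (Finset.mem_range.1 hn)

lemma winding_eq_k_of_height_le (hv : 0 < γ.v.1) {y : ℤ}
    (h : ∀ n ≤ γ.N, height γ.v (γ.f n) ≤ y) : γ.winding (0, y) = γ.k := by
  have hstep : ∀ n ∈ Finset.range γ.N, crossing γ.v (0, y) (γ.f n) (γ.d n) =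
      ((γ.f (n + 1 : ℕ)).1 - 1) / γ.v.1 - ((γ.f n).1 - 1) / γ.v.1 := by
    intro n hn
    have hsucc : height γ.v (γ.f n + γ.d n) ≤ y := by
      rw [γ.f_add_d]
      exact_mod_cast h (n + 1) (Finset.mem_range.1 hn)
    rw [crossing_eq_of_height_le hv (γ.d_mem n) (h n (Finset.mem_range.1 hn).le) hsucc, γ.f_add_d]
    push_cast
    rfl
  rw [winding, Finset.sum_congr rfl hstep,
    Finset.sum_range_sub (fun n : ℕ => ((γ.f n).1 - 1) / γ.v.1), Nat.cast_zero,
    ← zero_add (γ.N : ℤ), γ.add_period, Prod.fst_add, Prod.smul_fst, smul_eq_mul,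
    add_sub_right_comm, Int.add_mul_ediv_right _ _ hv.ne', add_sub_cancel_left]

lemma winding_vertex (hv : γ.v.1 ≠ 0) (hk : γ.k ≠ 0) (n : ℤ) :
    γ.winding (leftCell (γ.f n) (γ.d n)) = γ.winding (leftCell (γ.f (n - 1)) (γ.d (n - 1))) ∧
      γ.winding (leftCell (γ.f n) (γ.d n)) = γ.winding (rightCell (γ.f n) (γ.d n)) + 1 := by
  have hprev : γ.f (n - 1) = γ.f n - γ.d (n - 1) := by
    rw [eq_sub_iff_add_eq, γ.f_add_d, sub_add_cancel]
  have hout := γ.mult_eq_of_modEq hk (n := n) modEq_rfl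
  have hin := fun p e (h : p + e = γ.f n) => γ.mult_eq_of_add_eq hk h
  rw [hprev]
  rcases hp : γ.f n with ⟨x, y⟩
  rw [hp] at hout hin
  refine leftCell_of_vertex_jumps (γ.d_mem n) (γ.d_mem (n - 1)) (γ.d_sub_one_ne_neg hk n)
    ?_ ?_ ?_ ?_
  · have := γ.winding_add_fst hv (x - 1) y
    rwa [sub_add_cancel, hout, hin _ _ (by simp)] at this
  · have := γ.winding_add_snd hv x (y - 1)
    rwa [sub_add_cancel, hout, hin _ _ (by simp)] at this
  · have := γ.winding_add_snd hv (x - 1) (y - 1)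
    rwa [sub_add_cancel, sub_add_cancel, hout, hin _ _ (by simp)] at this
  · have := γ.winding_add_fst hv (x - 1) (y - 1)
    rwa [sub_add_cancel, sub_add_cancel, hout, hin _ _ (by simp)] at this

lemma winding_leftCell (hv : γ.v.1 ≠ 0) (hk : γ.k ≠ 0) (n : ℤ) :
    γ.winding (leftCell (γ.f n) (γ.d n)) = γ.winding (leftCell (γ.f 0) (γ.d 0)) := by
  induction n using Int.induction_on with
  | zero => rfl
  | succ n ih => rw [(γ.winding_vertex hv hk (n + 1)).1, add_sub_cancel_right, ih]
  | pred n ih => rw [← ih, (γ.winding_vertex hv hk (-n)).1]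

lemma winding_column_mem (hv : γ.v.1 ≠ 0) (hk : γ.k ≠ 0) {y : ℤ}
    (h : γ.winding (0, y + 1) ≠ γ.winding (0, y)) :
    let l := γ.winding (leftCell (γ.f 0) (γ.d 0))
    γ.winding (0, y) ∈ Set.Icc (l - 1) l ∧ γ.winding (0, y + 1) ∈ Set.Icc (l - 1) l := by
  intro l
  have hl n : γ.winding (leftCell (γ.f n) (γ.d n)) = l := γ.winding_leftCell hv hk n
  have hr n : γ.winding (rightCell (γ.f n) (γ.d n)) = l - 1 := by
    linarith [(γ.winding_vertex hv hk n).2, hl n]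
  have hshift {n : ℤ} {p : ℤ × ℤ} (hn : γ.f n ≡ p [PMOD γ.v]) (u : ℤ × ℤ) :
      γ.winding (γ.f n - u) = γ.winding (p - u) :=
    γ.winding_congr (hn.sub_right u)
  rw [γ.winding_add_snd hv, zero_add] at h
  suffices (γ.winding (0, y) = l ∧ γ.winding (0, y + 1) = l - 1) ∨
      (γ.winding (0, y) = l - 1 ∧ γ.winding (0, y + 1) = l) by
    rcases this with ⟨h1, h2⟩ | ⟨h1, h2⟩ <;> simp only [Set.mem_Icc, h1, h2] <;> omega
  by_cases hE : γ.mult (0, y + 1) (1, 0) = 0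
  · obtain ⟨n, hd, hn⟩ := γ.exists_of_mult_ne_zero (p := (1, y + 1)) (e := (-1, 0))
      (by rintro h'; rw [hE, h', sub_zero, add_zero] at h; exact h rfl)
    have h1 := hl n
    have h2 := hr n
    simp only [leftCell, rightCell, hd] at h1 h2
    norm_num [hshift hn] at h1 h2
    exact Or.inl ⟨h1, h2⟩
  · obtain ⟨n, hd, hn⟩ := γ.exists_of_mult_ne_zero hE
    have h1 := hl n
    have h2 := hr n
    simp only [leftCell, rightCell, hd] at h1 h2
    norm_num [hshift hn] at h1 h2
    exact Or.inr ⟨h2, h1⟩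

theorem abs_k_le_one_of_fst_pos (hv : 0 < γ.v.1) : |γ.k| ≤ 1 := by
  by_contra hk'
  rw [abs_le] at hk'
  have hk : γ.k ≠ 0 := by omega
  set B := ∑ n ∈ Finset.range (γ.N + 1), |height γ.v (γ.f n)|
  have hB n (hn : n ≤ γ.N) : |height γ.v (γ.f n)| ≤ B :=
    Finset.single_le_sum (f := fun n : ℕ => |height γ.v (γ.f n)|) (fun _ _ => abs_nonneg _)
      (Finset.mem_range.2 (by omega))
  have hB0 : 0 ≤ B := (abs_nonneg _).trans (hB 0 (Nat.zero_le _))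
  have hbot : γ.winding (0, -B - 1) = 0 := γ.winding_eq_zero_of_lt_height hv.ne' fun n hn => by
    linarith [neg_abs_le (height γ.v (γ.f n)), hB n hn]
  have htop : γ.winding (0, B) = γ.k :=
    γ.winding_eq_k_of_height_le hv fun n hn => (le_abs_self _).trans (hB n hn)
  have := Int.mem_of_ne_of_jumps_mem (g := fun y => γ.winding (0, y))
    (fun _ => γ.winding_column_mem hv.ne' hk) (a := -B - 1) (b := B) (by omega)
    (by rw [hbot, htop]; exact hk.symm)
  simp only [hbot, htop, Set.mem_Icc] at this
  omega

def map (σ : ℤ × ℤ ≃+ ℤ × ℤ) (hσ : ∀ d ∈ Dir, σ d ∈ Dir) : SimpleCylinderLoop where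
  f n := σ (γ.f n)
  v := σ γ.v
  N := γ.N
  k := γ.k
  v_ne_zero := (map_ne_zero_iff σ σ.injective).2 γ.v_ne_zero
  step_mem n := by rw [← map_sub]; exact hσ _ (γ.step_mem n)
  add_period n := by rw [γ.add_period, map_add, map_zsmul]
  simple a b h := γ.simple a b ((map_modEq_iff σ σ.injective).1 h)

theorem abs_k_le_one : |γ.k| ≤ 1 := by
  obtain ⟨σ, hσ, hpos⟩ := exists_addEquiv_dir_fst_pos γ.v_ne_zero
  exact (γ.map σ hσ).abs_k_le_one_of_fst_pos hpos

end SimpleCylinderLoop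

def periodicExtension (p : ℕ → ℤ × ℤ) (N : ℕ) (u : ℤ × ℤ) (n : ℤ) : ℤ × ℤ :=
  p (n % N).toNat + (n / N) • u

section PeriodicExtension

variable {p : ℕ → ℤ × ℤ} {N : ℕ} {u : ℤ × ℤ}

lemma periodicExtension_add_mul {r : ℕ} (hr : r < N) (q : ℤ) :
    periodicExtension p N u (r + q * N) = p r + q • u := by
  have hN : (N : ℤ) ≠ 0 := by omega
  rw [periodicExtension, Int.add_mul_emod_self_right, Int.add_mul_ediv_right _ _ hN,
    Int.emod_eq_of_lt (by omega) (by omega), Int.ediv_eq_zero_of_lt (by omega) (by omega),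
    zero_add, Int.toNat_natCast]

lemma exists_eq_add_mul (hN : 0 < N) (n : ℤ) : ∃ r < N, ∃ q : ℤ, n = r + q * N := by
  obtain ⟨r, hr, hrn⟩ := Int.exists_mem_range_modEq hN n
  obtain ⟨q, hq⟩ := hrn.dvd
  exact ⟨r, Finset.mem_range.1 hr, q, by linarith⟩

lemma periodicExtension_add (hN : 0 < N) (n : ℤ) :
    periodicExtension p N u (n + N) = periodicExtension p N u n + u := by
  obtain ⟨r, hr, q, rfl⟩ := exists_eq_add_mul hN n
  rw [show (r : ℤ) + q * N + N = r + (q + 1) * N by ring, periodicExtension_add_mul hr,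
    periodicExtension_add_mul hr, add_smul, one_smul, add_assoc]

lemma periodicExtension_succ_sub (hN : 0 < N) (hu : p N = p 0 + u) {r : ℕ} (hr : r < N)
    (q : ℤ) : periodicExtension p N u (r + q * N + 1) - periodicExtension p N u (r + q * N) =
      p (r + 1) - p r := by
  rw [periodicExtension_add_mul hr]
  rcases (show r + 1 ≤ N from hr).eq_or_lt with hr' | hr'
  · rw [show (r : ℤ) + q * N + 1 = (0 : ℕ) + (q + 1) * N by push_cast; rw [← hr']; push_cast; ring,
      periodicExtension_add_mul hN, hr', hu, add_smul, one_smul]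
    abel
  · rw [show (r : ℤ) + q * N + 1 = (r + 1 : ℕ) + q * N by push_cast; ring,
      periodicExtension_add_mul hr']
    abel

end PeriodicExtension

theorem abs_le_one_of_path {p : ℕ → ℤ × ℤ} {N : ℕ} {v : ℤ × ℤ} {K : ℤ} (hN : 0 < N)
    (hv : v ≠ 0) (hstep : ∀ r < N, p (r + 1) - p r ∈ Dir) (hK : p N = p 0 + K • v)
    (hsimple : ∀ r < N, ∀ r' < N, p r ≡ p r' [PMOD v] → r = r') : |K| ≤ 1 :=
  SimpleCylinderLoop.abs_k_le_one
    { f := periodicExtension p N (K • v)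
      v := v
      N := N
      k := K
      v_ne_zero := hv
      step_mem := fun n => by
        obtain ⟨r, hr, q, rfl⟩ := exists_eq_add_mul hN n
        rw [periodicExtension_succ_sub hN hK hr]
        exact hstep r hr
      add_period := periodicExtension_add hN
      simple := fun a b h => by
        obtain ⟨r, hr, q, rfl⟩ := exists_eq_add_mul hN a
        obtain ⟨r', hr', q', rfl⟩ := exists_eq_add_mul hN b
        rw [periodicExtension_add_mul hr, periodicExtension_add_mul hr', smul_smul,
          smul_smul] at h
        obtain rfl := hsimple r hr r' hr'
          (((add_zsmul_modEq _).symm.trans h).trans (add_zsmul_modEq _))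
        exact Int.modEq_iff_dvd.2 ⟨q' - q, by ring⟩ }

section Words

variable {m : List (ℤ × ℤ)}

lemma psum_append_self_of_le {n : ℕ} (hn : n ≤ m.length) : psum (m ++ m) n = psum m n := by
  rw [psum, List.take_append_of_le_length hn, psum]

lemma psum_append_self_length_add (r : ℕ) :
    psum (m ++ m) (m.length + r) = m.sum + psum m r := by
  rw [psum, List.take_append, List.take_of_length_le (by omega), Nat.add_sub_cancel_left,
    List.sum_append, psum]

lemma psum_succ_sub {r : ℕ} (hr : r < m.length) : psum m (r + 1) - psum m r = m[r] := by
  rw [psum, psum, List.sum_take_succ _ _ hr, add_sub_cancel_left]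

lemma SelfAvoiding.eq_of_psum_eq (h : SelfAvoiding m) {a b : ℕ} (ha : a ≤ m.length)
    (hb : b ≤ m.length) (hab : psum m a = psum m b) : a = b := by
  exact congrArg Fin.val (@h ⟨a, by omega⟩ ⟨b, by omega⟩ hab)

lemma SelfAvoiding.sum_ne_zero_of_append_self (hsq : SelfAvoiding (m ++ m))
    (hm : 0 < m.length) : m.sum ≠ 0 := by
  intro h0
  have := hsq.eq_of_psum_eq (a := m.length + 0) (b := 0) (by simp) (by simp)
    (by rw [psum_append_self_length_add, h0, zero_add, psum_append_self_of_le (Nat.zero_le _)])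
  omega

lemma SelfAvoiding.psum_ne_add_zsmul_of_append_self (hsq : SelfAvoiding (m ++ m)) {x y : ℕ}
    (hxy : x < y) (hy : y < m.length) {K : ℤ} (hK : |K| ≤ 1) :
    psum m y ≠ psum m x + K • m.sum := by
  intro h
  have hlen : (m ++ m).length = m.length + m.length := List.length_append
  have hK' : K = -1 ∨ K = 0 ∨ K = 1 := by rw [abs_le] at hK; omega
  rcases hK' with rfl | rfl | rfl
  · have := hsq.eq_of_psum_eq (a := x) (b := m.length + y) (by omega) (by omega)
      (by rw [psum_append_self_of_le (by omega), psum_append_self_length_add, h]; module)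
    omega
  · have := hsq.eq_of_psum_eq (a := y) (b := x) (by omega) (by omega)
      (by rw [psum_append_self_of_le (by omega), psum_append_self_of_le (by omega), h]; module)
    omega
  · have := hsq.eq_of_psum_eq (a := y) (b := m.length + x) (by omega) (by omega)
      (by rw [psum_append_self_of_le (by omega), psum_append_self_length_add, h]; module)
    omega

theorem not_modEq_psum (hdir : ∀ d ∈ m, d ∈ Dir) (hsq : SelfAvoiding (m ++ m)) {x y : ℕ}
    (hxy : x < y) (hy : y < m.length) : ¬ psum m x ≡ psum m y [PMOD m.sum] := by
  intro hcong
  have hex : ∃ g, 0 < g ∧ ∃ x, x + g < m.length ∧ psum m x ≡ psum m (x + g) [PMOD m.sum] :=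
    ⟨y - x, by omega, x, by omega, by rwa [Nat.add_sub_cancel' hxy.le]⟩
  obtain ⟨hg, x₀, hx₀, hx₀g⟩ := Nat.find_spec hex
  set g := Nat.find hex
  obtain ⟨K, hK⟩ := modEq_iff_eq_add_zsmul.1 hx₀g
  have hincong : ∀ r < g, ∀ r' < g, psum m (x₀ + r) ≡ psum m (x₀ + r') [PMOD m.sum] → r = r' := by
    intro r hr r' hr' h
    by_contra hne
    rcases Nat.lt_or_gt_of_ne hne with hlt | hlt
    · refine Nat.find_min hex (show r' - r < g by omega) ⟨by omega, x₀ + r, by omega, ?_⟩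
      rwa [show x₀ + r + (r' - r) = x₀ + r' by omega]
    · refine Nat.find_min hex (show r - r' < g by omega) ⟨by omega, x₀ + r', by omega, ?_⟩
      rw [show x₀ + r' + (r - r') = x₀ + r by omega]
      exact h.symm
  have hK1 : |K| ≤ 1 := abs_le_one_of_path (p := fun r => psum m (x₀ + r)) hg
    (hsq.sum_ne_zero_of_append_self (by omega))
    (fun r hr => by
      simp only [← add_assoc]
      rw [psum_succ_sub (by omega)]
      exact hdir _ (List.getElem_mem _))
    (by simpa using hK) hincong
  exact hsq.psum_ne_add_zsmul_of_append_self (by omega) hx₀ hK1 hK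

end Words

theorem stmt1_general (m : List (ℤ × ℤ)) (hdir : ∀ d ∈ m, d ∈ Dir)
    (hsq : SelfAvoiding (m ++ m)) :
    ∀ (i j : ℤ) (s t : ℕ), s < m.length → t < m.length → (i, s) ≠ (j, t) →
      i • m.sum + psum m s ≠ j • m.sum + psum m t := by
  intro i j s t hs ht hne heq
  have hmod : psum m s ≡ psum m t [PMOD m.sum] :=
    modEq_iff_eq_add_zsmul.2 ⟨i - j, by linear_combination (norm := module) -heq⟩
  rcases lt_trichotomy s t with hst | rfl | hst
  · exact not_modEq_psum hdir hsq hst ht hmod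
  · rw [add_left_inj] at heq
    exact hne (by rw [smul_left_injective ℤ (hsq.sum_ne_zero_of_append_self (by omega)) heq])
  · exact not_modEq_psum hdir hsq hst hs hmod.symm

theorem stmt1 (m : List (ℤ × ℤ)) (hm : m ≠ []) (hdir : ∀ d ∈ m, d ∈ Dir)
    (hsq : SelfAvoiding (m ++ m)) :
    ∀ (i j : ℤ) (s t : ℕ), s < m.length → t < m.length → (i, s) ≠ (j, t) →
      i • m.sum + psum m s ≠ j • m.sum + psum m t :=
  stmt1_general m hdir hsq
end
end

section
/- In a confluent tile assembly system, any two producible (stable, seed-containing) assemblies α and α′ have a common producible extension: there is a producible assembly β whose domain contains the union of the domains of α and α′ and which restricts to α on dom(α) and to α′ on dom(α′). Consequently, there is a unique maximal producible assembly α_max such that the domain of every producible assembly is contained in dom(α_max). -/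
/-- A tile type over the glue alphabet `G`: a glue for each direction. -/
abbrev Tile (G : Type) := (ℤ × ℤ) → G

/-- The domain of an assembly. -/
def Dom {G : Type} (α : ℤ × ℤ → Option (Tile G)) : Set (ℤ × ℤ) := {v | α v ≠ none}

/-- `v` and `w` are joined by an edge of the binding graph of `α`:
they are adjacent and the abutting glues match. -/
def BindEdge {G : Type} (α : ℤ × ℤ → Option (Tile G)) (v w : ℤ × ℤ) : Prop :=
  ∃ d ∈ Dir, w = v + d ∧ ∃ t t' : Tile G, α v = some t ∧ α w = some t' ∧ t d = t' (-d)

/-- An assembly is stable if its binding graph is connected. -/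
def Stable {G : Type} (α : ℤ × ℤ → Option (Tile G)) : Prop :=
  ∀ v ∈ Dom α, ∀ w ∈ Dom α,
    Relation.ReflTransGen (fun x y => BindEdge α x y ∨ BindEdge α y x) v w

/-- Producible: stable, seed `σ` at the origin, and all tiles from `T ∪ {σ}`. -/
def Producible {G : Type} (T : Set (Tile G)) (σ : Tile G)
    (α : ℤ × ℤ → Option (Tile G)) : Prop :=
  Stable α ∧ α ((0,0) : ℤ × ℤ) = some σ ∧ ∀ v t, α v = some t → t ∈ T ∪ {σ}

/-- Two assemblies are compatible if they agree on the intersection of their domains. -/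
def Compatible {G : Type} (α β : ℤ × ℤ → Option (Tile G)) : Prop :=
  ∀ v t t', α v = some t → β v = some t' → t = t'

/-- A TAS is confluent if every two producible assemblies are compatible. -/
def Confluent {G : Type} (T : Set (Tile G)) (σ : Tile G) : Prop :=
  ∀ α β, Producible T σ α → Producible T σ β → Compatible α β

/-!
Pairwise compatible assemblies can be glued pointwise into one assembly extending all of them.
If they are producible, so is the glued assembly: every tile of it lies in one of them, hence is
joined to the seed through that one's binding graph, whose edges survive in the extension.
Under confluence any two producible assemblies, and indeed all of them at once, are pairwise
compatible; gluing all producible assemblies gives the maximal one.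
-/

section Gluing

variable {G : Type}

def Extends (β α : ℤ × ℤ → Option (Tile G)) : Prop := ∀ v ∈ Dom α, β v = α v

lemma mem_Dom_of_eq_some {α : ℤ × ℤ → Option (Tile G)} {v : ℤ × ℤ} {t : Tile G}
    (h : α v = some t) : v ∈ Dom α := by simp [Dom, h]

lemma Extends.Dom_subset {α β : ℤ × ℤ → Option (Tile G)} (h : Extends β α) :
    Dom α ⊆ Dom β := fun v hv => show β v ≠ none by rwa [h v hv]

lemma Extends.eq_some {α β : ℤ × ℤ → Option (Tile G)} (h : Extends β α) {v : ℤ × ℤ}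
    {t : Tile G} (hv : α v = some t) : β v = some t :=
  (h v (mem_Dom_of_eq_some hv)).trans hv

lemma Extends.bindEdge {α β : ℤ × ℤ → Option (Tile G)} (h : Extends β α) {x y : ℤ × ℤ}
    (he : BindEdge α x y) : BindEdge β x y := by
  obtain ⟨d, hd, hy, t, t', hx, hy', hglue⟩ := he
  exact ⟨d, hd, hy, t, t', h.eq_some hx, h.eq_some hy', hglue⟩

lemma Extends.reflTransGen {α β : ℤ × ℤ → Option (Tile G)} (h : Extends β α) {x y : ℤ × ℤ}
    (hxy : Relation.ReflTransGen (fun a b => BindEdge α a b ∨ BindEdge α b a) x y) :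
    Relation.ReflTransGen (fun a b => BindEdge β a b ∨ BindEdge β b a) x y :=
  Relation.ReflTransGen.mono (fun _ _ hab => hab.imp h.bindEdge h.bindEdge) x y hxy

lemma eq_of_compatible_of_Dom_eq {α β : ℤ × ℤ → Option (Tile G)} (hc : Compatible α β)
    (hdom : Dom α = Dom β) : α = β := by
  funext v
  cases hα : α v with
  | none =>
    have hv : v ∉ Dom β := hdom ▸ fun h => h hα
    exact (not_not.mp hv).symm
  | some t =>
    obtain ⟨t', hβ⟩ := Option.ne_none_iff_exists'.mp
      (show v ∈ Dom β from hdom ▸ mem_Dom_of_eq_some hα)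
    rw [hβ, hc v t t' hα hβ]

/-- Only meaningful for pairwise compatible `S`; otherwise the tile at `v` is an arbitrary
choice among the members of `S` covering `v`. -/
noncomputable def glue (S : Set (ℤ × ℤ → Option (Tile G))) : ℤ × ℤ → Option (Tile G) :=
  open Classical in
  fun v => if h : ∃ α ∈ S, v ∈ Dom α then h.choose v else none

lemma exists_mem_Dom_of_mem_Dom_glue {S : Set (ℤ × ℤ → Option (Tile G))} {v : ℤ × ℤ}
    (hv : v ∈ Dom (glue S)) : ∃ α ∈ S, v ∈ Dom α := by
  by_contra h
  exact hv (dif_neg h)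

lemma extends_glue {S : Set (ℤ × ℤ → Option (Tile G))}
    (hS : S.Pairwise Compatible) {α : ℤ × ℤ → Option (Tile G)} (hα : α ∈ S) :
    Extends (glue S) α := by
  intro v hv
  have h : ∃ α ∈ S, v ∈ Dom α := ⟨α, hα, hv⟩
  obtain ⟨hβS, hvβ⟩ := h.choose_spec
  obtain ⟨t, ht⟩ := Option.ne_none_iff_exists'.mp hv
  obtain ⟨t', ht'⟩ := Option.ne_none_iff_exists'.mp hvβ
  have htt' : t' = t := by
    by_cases hβα : h.choose = α
    · simpa [hβα, ht] using ht'.symm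
    · exact hS hβS hα hβα v t' t ht' ht
  simp only [glue, dif_pos h, ht', ht, htt']

lemma producible_glue {T : Set (Tile G)} {σ : Tile G} {S : Set (ℤ × ℤ → Option (Tile G))}
    (hS : S.Pairwise Compatible) (hne : S.Nonempty) (hprod : ∀ α ∈ S, Producible T σ α) :
    Producible T σ (glue S) := by
  have hcover : ∀ v ∈ Dom (glue S), ∃ α ∈ S, v ∈ Dom α := fun _ =>
    exists_mem_Dom_of_mem_Dom_glue
  have hseed : ∀ α ∈ S, (0, 0) ∈ Dom α := fun α hα => mem_Dom_of_eq_some (hprod α hα).2.1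
  refine ⟨fun v hv w hw => ?_, ?_, ?_⟩
  · obtain ⟨α, hα, hvα⟩ := hcover v hv
    obtain ⟨β, hβ, hwβ⟩ := hcover w hw
    exact ((extends_glue hS hα).reflTransGen ((hprod α hα).1 v hvα _ (hseed α hα))).trans
      ((extends_glue hS hβ).reflTransGen ((hprod β hβ).1 _ (hseed β hβ) w hwβ))
  · obtain ⟨α, hα⟩ := hne
    exact (extends_glue hS hα).eq_some (hprod α hα).2.1
  · intro v t ht
    obtain ⟨α, hα, hvα⟩ := hcover v (mem_Dom_of_eq_some ht)
    exact (hprod α hα).2.2 v t ((extends_glue hS hα v hvα).symm.trans ht)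

def seed (σ : Tile G) : ℤ × ℤ → Option (Tile G) :=
  fun v => if v = (0, 0) then some σ else none

lemma producible_seed (T : Set (Tile G)) (σ : Tile G) : Producible T σ (seed σ) := by
  have hdom : ∀ v ∈ Dom (seed σ), v = (0, 0) := fun v hv => by
    by_contra h
    exact hv (if_neg h)
  refine ⟨fun v hv w hw => by rw [hdom v hv, hdom w hw], if_pos rfl, fun v t ht => ?_⟩
  rw [seed, if_pos (hdom v (mem_Dom_of_eq_some ht))] at ht
  exact Or.inr (Option.some_injective _ ht).symm

lemma Confluent.pairwise_compatible {T : Set (Tile G)} {σ : Tile G} (hconf : Confluent T σ)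
    {S : Set (ℤ × ℤ → Option (Tile G))} (hprod : ∀ α ∈ S, Producible T σ α) :
    S.Pairwise Compatible :=
  fun α hα β hβ _ => hconf α β (hprod α hα) (hprod β hβ)

end Gluing

theorem stmt4_general {G : Type} (T : Set (Tile G)) (σ : Tile G)
    (hconf : Confluent T σ) :
    (∀ α β, Producible T σ α → Producible T σ β →
      ∃ γ, Producible T σ γ ∧ Dom α ∪ Dom β ⊆ Dom γ ∧
        (∀ v ∈ Dom α, γ v = α v) ∧ (∀ v ∈ Dom β, γ v = β v)) ∧
    (∃! αmax, Producible T σ αmax ∧ ∀ α, Producible T σ α → Dom α ⊆ Dom αmax) := by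
  constructor
  · intro α β hα hβ
    have hprod : ∀ γ ∈ ({α, β} : Set _), Producible T σ γ := by
      rintro γ (rfl | rfl) <;> assumption
    have hS := hconf.pairwise_compatible hprod
    have hαS := extends_glue hS (Set.mem_insert α {β})
    have hβS := extends_glue hS (Set.mem_insert_of_mem α rfl)
    exact ⟨glue _, producible_glue hS (Set.insert_nonempty α {β}) hprod,
      Set.union_subset hαS.Dom_subset hβS.Dom_subset, hαS, hβS⟩
  · have hS := hconf.pairwise_compatible (S := {α | Producible T σ α}) fun _ h => h
    have hmax := producible_glue hS ⟨_, producible_seed T σ⟩ fun _ h => h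
    have hdom : ∀ α, Producible T σ α → Dom α ⊆ Dom (glue {α | Producible T σ α}) :=
      fun α hα => (extends_glue hS hα).Dom_subset
    refine ⟨_, ⟨hmax, hdom⟩, fun α ⟨hα, hαdom⟩ => ?_⟩
    exact eq_of_compatible_of_Dom_eq (hconf α _ hα hmax)
      ((hdom α hα).antisymm (hαdom _ hmax))

theorem stmt4 {G : Type} [Finite G] (T : Set (Tile G)) (hT : T.Finite) (σ : Tile G)
    (hconf : Confluent T σ) :
    (∀ α β, Producible T σ α → Producible T σ β →
      ∃ γ, Producible T σ γ ∧ Dom α ∪ Dom β ⊆ Dom γ ∧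
        (∀ v ∈ Dom α, γ v = α v) ∧ (∀ v ∈ Dom β, γ v = β v)) ∧
    (∃! αmax, Producible T σ αmax ∧ ∀ α, Producible T σ α → Dom α ⊆ Dom αmax) :=
  stmt4_general T σ hconf
end

section
/- In a confluent tile assembly system, every stable producible assembly is the union of its assembly paths: for every point v in the domain of a producible assembly α, there is a producible assembly whose binding graph is a simple path from the origin (0,0) to v, agreeing with α on its domain. -/
/-!
Stability gives a walk from the seed to `v` in the binding graph of `α`; shortcutting it yields a
simple path, and restricting `α` to the vertices of that path keeps every edge of the path, so the
restriction is again stable and producible.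
-/

section BindingGraph

variable {G : Type} {α : ℤ × ℤ → Option (Tile G)} {u v w : ℤ × ℤ}

lemma neg_mem_Dir {d : ℤ × ℤ} (hd : d ∈ Dir) : -d ∈ Dir := by
  simp only [Dir, Set.mem_insert_iff, Set.mem_singleton_iff] at hd ⊢
  rcases hd with rfl | rfl | rfl | rfl <;> simp

lemma zero_notMem_Dir : (0 : ℤ × ℤ) ∉ Dir := by
  simp [Dir, Prod.ext_iff]

namespace BindEdge

lemma symm (h : BindEdge α v w) : BindEdge α w v := by
  obtain ⟨d, hd, rfl, t, t', hv, hw, hg⟩ := h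
  exact ⟨-d, neg_mem_Dir hd, by abel, t', t, hw, hv, by rw [neg_neg, hg]⟩

lemma ne (h : BindEdge α v w) : v ≠ w := by
  obtain ⟨d, hd, rfl, -⟩ := h
  intro hv
  obtain rfl : d = 0 := by simpa using hv
  exact zero_notMem_Dir hd

lemma mem_dom_left (h : BindEdge α v w) : v ∈ Dom α := by
  obtain ⟨-, -, -, t, -, hv, -⟩ := h
  simp [Dom, hv]

end BindEdge

def bindingGraph (α : ℤ × ℤ → Option (Tile G)) : SimpleGraph (ℤ × ℤ) where
  Adj := BindEdge α
  symm := ⟨fun _ _ => BindEdge.symm⟩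
  loopless := ⟨fun _ h => h.ne rfl⟩

lemma bindingGraph_adj : (bindingGraph α).Adj v w ↔ BindEdge α v w := Iff.rfl

lemma stable_iff_reachable :
    Stable α ↔ ∀ v ∈ Dom α, ∀ w ∈ Dom α, (bindingGraph α).Reachable v w := by
  have hsymm : (fun x y => BindEdge α x y ∨ BindEdge α y x) = BindEdge α := by
    ext x y
    exact or_iff_left_of_imp BindEdge.symm
  simp only [Stable, hsymm, SimpleGraph.reachable_iff_reflTransGen]
  exact Iff.rfl

open Classical in
noncomputable def restrict (α : ℤ × ℤ → Option (Tile G)) (S : Set (ℤ × ℤ)) :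
    ℤ × ℤ → Option (Tile G) :=
  fun w => if w ∈ S then α w else none

section restrict

variable {S : Set (ℤ × ℤ)}

lemma restrict_apply_of_mem (hw : w ∈ S) : restrict α S w = α w := by
  simp [restrict, hw]

lemma dom_restrict : Dom (restrict α S) = S ∩ Dom α := by
  ext w
  by_cases hw : w ∈ S <;> simp [Dom, restrict, hw]

lemma BindEdge.restrict (h : BindEdge α v w) (hv : v ∈ S) (hw : w ∈ S) :
    BindEdge (restrict α S) v w := by
  simpa only [BindEdge, restrict_apply_of_mem hv, restrict_apply_of_mem hw] using h

lemma Producible.restrict {T : Set (Tile G)} {σ : Tile G} (hα : Producible T σ α)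
    (h0 : ((0, 0) : ℤ × ℤ) ∈ S) (hS : Stable (restrict α S)) :
    Producible T σ (restrict α S) := by
  refine ⟨hS, by rw [restrict_apply_of_mem h0, hα.2.1], fun w t hw => hα.2.2 w t ?_⟩
  by_cases hwS : w ∈ S
  · rwa [restrict_apply_of_mem hwS] at hw
  · simp [_root_.restrict, hwS] at hw

end restrict

namespace SimpleGraph.Walk

lemma support_subset_dom (p : (bindingGraph α).Walk u v) (hv : v ∈ Dom α) :
    {w | w ∈ p.support} ⊆ Dom α := by
  induction p with
  | nil => simpa using hv
  | cons h p ih =>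
    intro w hw
    rcases List.mem_cons.1 hw with rfl | hw
    · exact BindEdge.mem_dom_left h
    · exact ih hv hw

lemma stable_restrict_support (p : (bindingGraph α).Walk u v) :
    Stable (restrict α {w | w ∈ p.support}) := by
  have hreach : ∀ k, (bindingGraph (restrict α {w | w ∈ p.support})).Reachable u (p.getVert k) := by
    intro k
    induction k with
    | zero => rw [p.getVert_zero]
    | succ k ih =>
      rcases lt_or_ge k p.length with hk | hk
      · have hedge : BindEdge (restrict α {w | w ∈ p.support}) (p.getVert k) (p.getVert (k + 1)) :=
          (bindingGraph_adj.1 (p.adj_getVert_succ hk)).restrict (p.getVert_mem_support k)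
            (p.getVert_mem_support (k + 1))
        exact ih.trans (bindingGraph_adj.2 hedge).reachable
      · have hstay : p.getVert (k + 1) = p.getVert k := by
          rw [p.getVert_of_length_le hk, p.getVert_of_length_le (by omega)]
        rwa [hstay]
  rw [stable_iff_reachable, dom_restrict]
  rintro x ⟨hx, -⟩ y ⟨hy, -⟩
  obtain ⟨k, rfl, -⟩ := mem_support_iff_exists_getVert.1 hx
  obtain ⟨m, rfl, -⟩ := mem_support_iff_exists_getVert.1 hy
  exact (hreach k).symm.trans (hreach m)

end SimpleGraph.Walk

end BindingGraph

theorem stmt5_general {G : Type} (T : Set (Tile G)) (σ : Tile G)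
    (α : ℤ × ℤ → Option (Tile G)) (hα : Producible T σ α)
    (v : ℤ × ℤ) (hv : v ∈ Dom α) :
    ∃ (n : ℕ) (f : ℕ → ℤ × ℤ) (β : ℤ × ℤ → Option (Tile G)),
      Producible T σ β ∧
      f 0 = ((0,0) : ℤ × ℤ) ∧ f n = v ∧
      (∀ i j, i ≤ n → j ≤ n → f i = f j → i = j) ∧
      Dom β = {w | ∃ k ≤ n, f k = w} ∧
      (∀ k < n, BindEdge β (f k) (f (k+1))) ∧
      (∀ w ∈ Dom β, β w = α w) := by
  have h0 : ((0, 0) : ℤ × ℤ) ∈ Dom α := by simp [Dom, hα.2.1]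
  obtain ⟨p⟩ := stable_iff_reachable.1 hα.1 _ h0 _ hv
  set q := p.bypass
  set S := {w | w ∈ q.support}
  have hS : S = {w | ∃ k ≤ q.length, q.getVert k = w} := by
    ext w
    simp only [S, Set.mem_ofPred_eq, SimpleGraph.Walk.mem_support_iff_exists_getVert]
    exact exists_congr fun k => and_comm
  refine ⟨q.length, q.getVert, restrict α S,
    hα.restrict q.start_mem_support q.stable_restrict_support, q.getVert_zero, q.getVert_length,
    fun i j hi hj h => p.bypass_isPath.getVert_injOn hi hj h, ?_,
    fun k hk => (bindingGraph_adj.1 (q.adj_getVert_succ hk)).restrict (q.getVert_mem_support k)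
      (q.getVert_mem_support (k + 1)), ?_⟩
  · rw [dom_restrict, Set.inter_eq_left.2 (q.support_subset_dom hv)]
    exact hS
  · rw [dom_restrict]
    exact fun w hw => restrict_apply_of_mem hw.1

theorem stmt5 {G : Type} [Finite G] (T : Set (Tile G)) (hT : T.Finite) (σ : Tile G)
    (hconf : Confluent T σ)
    (α : ℤ × ℤ → Option (Tile G)) (hα : Producible T σ α)
    (v : ℤ × ℤ) (hv : v ∈ Dom α) :
    ∃ (n : ℕ) (f : ℕ → ℤ × ℤ) (β : ℤ × ℤ → Option (Tile G)),
      Producible T σ β ∧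
      f 0 = ((0,0) : ℤ × ℤ) ∧ f n = v ∧
      (∀ i j, i ≤ n → j ≤ n → f i = f j → i = j) ∧
      Dom β = {w | ∃ k ≤ n, f k = w} ∧
      (∀ k < n, BindEdge β (f k) (f (k+1))) ∧
      (∀ w ∈ Dom β, β w = α w) :=
  stmt5_general T σ α hα v hv
end

section
/- Let b, b′ ∈ ℤ² be nonzero collinear vectors pointing in the same direction (b = c·b′ for some positive rational c), and let a, a′ ∈ ℤ². Then there exist a finite set F₀ ⊆ ℤ², a finite set F₁ ⊆ ℤ², and a nonzero vector v ∈ ℤ² (a common multiple of b and b′) such that (a + ℕ·b) ∩ (a′ + ℕ·b′) = F₀ ∪ (F₁ + ℕ·v). -/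
/-!
Clearing denominators in `b = c • b'` gives positive integers `p, q` with `q • b = p • b'`, so the
set `S` of indices `n` for which `a + n • b` lies on the second ray is closed under `n ↦ n + q`.
Such a set of naturals is the union of the progressions `m + ℕ q` over the least element `m` of
each residue class mod `q` that meets it, and there are at most `q` of those.
-/

namespace Nat

def residueMinima (S : Set ℕ) (q : ℕ) : Set ℕ :=
  {n ∈ S | ∀ m ∈ S, m % q = n % q → n ≤ m}

lemma finite_residueMinima (S : Set ℕ) {q : ℕ} (hq : 0 < q) : (residueMinima S q).Finite := by
  refine Set.Finite.of_finite_image (f := (· % q)) ((Set.finite_Iio q).subset ?_) ?_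
  · rintro _ ⟨n, -, rfl⟩
    exact Nat.mod_lt n hq
  · intro n hn m hm hnm
    exact le_antisymm (hn.2 m hm.1 hnm.symm) (hm.2 n hn.1 hnm)

lemma exists_residueMinima_le {S : Set ℕ} (q : ℕ) {n : ℕ} (hn : n ∈ S) :
    ∃ m ∈ residueMinima S q, m ≤ n ∧ m % q = n % q := by
  classical
  have hex : ∃ m, m ∈ S ∧ m % q = n % q := ⟨n, hn, rfl⟩
  obtain ⟨hmS, hmod⟩ := Nat.find_spec hex
  refine ⟨Nat.find hex, ⟨hmS, fun m hm hm' => Nat.find_min' hex ⟨hm, hm'.trans hmod⟩⟩,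
    Nat.find_min' hex ⟨hn, rfl⟩, hmod⟩

lemma add_mul_mem_of_add_mem {S : Set ℕ} {q : ℕ} (hS : ∀ n ∈ S, n + q ∈ S) {n : ℕ} (hn : n ∈ S)
    (k : ℕ) : n + k * q ∈ S := by
  induction k with
  | zero => simpa using hn
  | succ k ih => simpa [Nat.succ_mul, ← Nat.add_assoc] using hS _ ih

lemma eq_residueMinima_add_mul {S : Set ℕ} {q : ℕ} (hS : ∀ n ∈ S, n + q ∈ S) :
    S = {n | ∃ m ∈ residueMinima S q, ∃ k : ℕ, n = m + k * q} := by
  ext n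
  constructor
  · intro hn
    obtain ⟨m, hm, hle, hmod⟩ := exists_residueMinima_le q hn
    obtain ⟨k, hk⟩ := (Nat.modEq_iff_dvd' hle).mp hmod
    exact ⟨m, hm, k, by rw [mul_comm, ← hk, Nat.add_sub_cancel' hle]⟩
  · rintro ⟨m, hm, k, rfl⟩
    exact add_mul_mem_of_add_mem hS hm.1 k

lemma exists_finset_eq_add_mul_of_add_mem {S : Set ℕ} {q : ℕ} (hq : 0 < q)
    (hS : ∀ n ∈ S, n + q ∈ S) :
    ∃ F : Finset ℕ, S = {n | ∃ m ∈ F, ∃ k : ℕ, n = m + k * q} :=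
  ⟨(finite_residueMinima S hq).toFinset, by simpa using eq_residueMinima_add_mul hS⟩

end Nat

lemma exists_finset_inter_eq_of_nsmul_eq_nsmul {M : Type*} [AddCommMonoid M] (a a' b b' : M)
    {p q : ℕ} (hq : 0 < q) (hv : q • b = p • b') :
    ∃ F : Finset M, {x | ∃ n : ℕ, x = a + n • b} ∩ {x | ∃ n : ℕ, x = a' + n • b'}
      = {x | ∃ f ∈ F, ∃ n : ℕ, x = f + n • (q • b)} := by
  classical
  set S : Set ℕ := {n | ∃ m : ℕ, a + n • b = a' + m • b'}
  have hS : ∀ n ∈ S, n + q ∈ S := by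
    rintro n ⟨m, hm⟩
    exact ⟨m + p, by rw [add_nsmul, ← add_assoc, hm, hv, add_nsmul, add_assoc]⟩
  obtain ⟨F, hF⟩ := Nat.exists_finset_eq_add_mul_of_add_mem hq hS
  have hmem := Set.ext_iff.mp hF
  refine ⟨F.image (fun n => a + n • b), ?_⟩
  ext x
  simp only [Set.mem_inter_iff, Set.mem_ofPred_eq, Finset.mem_image]
  constructor
  · rintro ⟨⟨n, rfl⟩, m, hm⟩
    obtain ⟨f, hf, k, rfl⟩ := (hmem n).mp ⟨m, hm⟩
    exact ⟨_, ⟨f, hf, rfl⟩, k, by rw [smul_smul, add_nsmul, add_assoc]⟩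
  · rintro ⟨_, ⟨f, hf, rfl⟩, k, rfl⟩
    obtain ⟨m, hm⟩ := (hmem (f + k * q)).mpr ⟨f, hf, k, rfl⟩
    have hx : a + f • b + k • q • b = a + (f + k * q) • b := by
      rw [smul_smul, add_nsmul, add_assoc]
    exact ⟨⟨_, hx⟩, m, hx.trans hm⟩

lemma Prod.den_nsmul_eq_num_nsmul {b b' : ℤ × ℤ} {c : ℚ} (hc : 0 ≤ c)
    (h₁ : (b.1 : ℚ) = c * b'.1) (h₂ : (b.2 : ℚ) = c * b'.2) :
    c.den • b = c.num.toNat • b' := by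
  have hnum : (c.num.toNat : ℚ) = c.den * c := by
    rw [← Int.cast_natCast, Int.toNat_of_nonneg (Rat.num_nonneg.mpr hc), mul_comm, Rat.mul_den_eq_num]
  have key : ∀ z z' : ℤ, (z : ℚ) = c * z' → (c.den : ℤ) * z = (c.num.toNat : ℤ) * z' := by
    intro z z' h
    exact_mod_cast (by rw [hnum, h, mul_assoc] : (c.den * z : ℚ) = c.num.toNat * z')
  ext
  · simpa [nsmul_eq_mul] using key _ _ h₁
  · simpa [nsmul_eq_mul] using key _ _ h₂

theorem stmt9_general (a a' b b' : ℤ × ℤ) (hb : b ≠ 0)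
    (hpos : ∃ c : ℚ, 0 < c ∧ (b.1 : ℚ) = c * b'.1 ∧ (b.2 : ℚ) = c * b'.2) :
    ∃ (F₀ F₁ : Finset (ℤ × ℤ)) (v : ℤ × ℤ),
      v ≠ 0 ∧
      (∃ k : ℕ, 0 < k ∧ v = k • b) ∧ (∃ k : ℕ, 0 < k ∧ v = k • b') ∧
      ({x | ∃ n : ℕ, x = a + n • b} ∩ {x | ∃ n : ℕ, x = a' + n • b'}
        = ↑F₀ ∪ {x | ∃ f ∈ F₁, ∃ n : ℕ, x = f + n • v}) := by
  obtain ⟨c, hc, h₁, h₂⟩ := hpos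
  have hv := Prod.den_nsmul_eq_num_nsmul hc.le h₁ h₂
  obtain ⟨F, hF⟩ := exists_finset_inter_eq_of_nsmul_eq_nsmul a a' b b' c.pos hv
  refine ⟨∅, F, c.den • b, smul_ne_zero c.den_nz hb, ⟨c.den, c.pos, rfl⟩,
    ⟨c.num.toNat, by simpa using Rat.num_pos.mpr hc, hv⟩, ?_⟩
  simpa using hF

theorem stmt9 (a a' b b' : ℤ × ℤ) (hb : b ≠ 0) (hb' : b' ≠ 0)
    (hpos : ∃ c : ℚ, 0 < c ∧ (b.1 : ℚ) = c * b'.1 ∧ (b.2 : ℚ) = c * b'.2) :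
    ∃ (F₀ F₁ : Finset (ℤ × ℤ)) (v : ℤ × ℤ),
      v ≠ 0 ∧
      (∃ k : ℕ, 0 < k ∧ v = k • b) ∧ (∃ k : ℕ, 0 < k ∧ v = k • b') ∧
      ({x | ∃ n : ℕ, x = a + n • b} ∩ {x | ∃ n : ℕ, x = a' + n • b'}
        = ↑F₀ ∪ {x | ∃ f ∈ F₁, ∃ n : ℕ, x = f + n • v}) :=
  stmt9_general a a' b b' hb hpos
end

section
/- Consider a quipu Q: a finite rooted directed graph whose vertices are labelled by tile types and whose arcs are labelled by unit directions of ℤ², such that from the root there is a unique path to each vertex, the arc-labels of every rooted walk form a self-avoiding path in ℤ², and every cycle has a nonzero displacement vector. Then the cover of any vertex x (the set of displacement vectors of rooted walks ending at x) is a semi-linear subset of ℤ² of one of the forms {a}, a + ℕ·b with b ≠ 0, or a + ℕ·b + ℕ·c with b, c nonzero and non-collinear, according as every rooted walk to x meets zero, one, or two cycles. -/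
/-- `f` is a walk of length `n` from `r` to `x` along arcs `E`. -/
def IsWalk {V : Type} (E : V → V → Prop) (f : ℕ → V) (n : ℕ) (r x : V) : Prop :=
  f 0 = r ∧ f n = x ∧ ∀ i < n, E (f i) (f (i+1))

/-- Displacement vector of a walk: the sum of its arc labels. -/
def WalkDisp {V : Type} (lab : V → V → ℤ × ℤ) (f : ℕ → V) (n : ℕ) : ℤ × ℤ :=
  ∑ i ∈ Finset.range n, lab (f i) (f (i+1))

/-- The cover of vertex `x`: displacement vectors of rooted walks ending at `x`. -/
def Cover {V : Type} (E : V → V → Prop) (lab : V → V → ℤ × ℤ) (r x : V) : Set (ℤ × ℤ) :=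
  {s | ∃ (f : ℕ → V) (n : ℕ), IsWalk E f n r x ∧ s = WalkDisp lab f n}

/-- Reachability along arcs. -/
def Reach {V : Type} (E : V → V → Prop) : V → V → Prop := Relation.ReflTransGen E

/-- A vertex lies on a cycle. -/
def Cyclic {V : Type} (E : V → V → Prop) (v : V) : Prop := ∃ w, E v w ∧ Reach E w v

/-- Two vertices lie on the same cycle (mutual reachability). -/
def SameCycle {V : Type} (E : V → V → Prop) (u v : V) : Prop := Reach E u v ∧ Reach E v u

/-
Loop erasure turns every rooted walk to `x` into the unique simple path `h`, so a walk to `x` is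
`h` with closed walks spliced in at the strongly connected components that `h` meets. Since a
rooted walk is determined by its displacement, all closed walks at a vertex `v` are powers of a
shortest one `z`: for a path `q` to `v` and a closed walk `g` at `v`, the walks `q g z` and
`q z g` have equal displacement, hence coincide, so `g` begins with `z`. Conjugating by paths
inside the component, every closed walk through it has displacement in `ℕ • b`, `b` the
displacement of `z`; so the cover is `a + ℕ • b (+ ℕ • c)`, and every such vector is realised by
splicing powers of the shortest cycles into `h`. If `b` and `c` were collinear, a relation
`p • b = q • c` or `p • b + q • c = 0` with `p, q > 0` would produce two distinct rooted walks
with equal displacement.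
-/

section Walks

variable {V : Type} {E : V → V → Prop} (lab : V → V → ℤ × ℤ)

theorem isWalk_edge {a b : V} (hab : E a b) :
    IsWalk E (fun t => if t = 0 then a else b) 1 a b :=
  ⟨if_pos rfl, if_neg one_ne_zero, fun i hi => by
    obtain rfl : i = 0 := by omega
    simpa using hab⟩

theorem IsWalk.prefix {f : ℕ → V} {n i : ℕ} {a b : V} (hw : IsWalk E f n a b) (hi : i ≤ n) :
    IsWalk E f i a (f i) :=
  ⟨hw.1, rfl, fun j hj => hw.2.2 j (by omega)⟩

theorem IsWalk.segment {f : ℕ → V} {n i j : ℕ} {a b : V} (hw : IsWalk E f n a b)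
    (hij : i ≤ j) (hj : j ≤ n) : IsWalk E (fun s => f (i + s)) (j - i) (f i) (f j) :=
  ⟨rfl, congrArg f (Nat.add_sub_cancel' hij), fun s hs => hw.2.2 (i + s) (by omega)⟩

theorem IsWalk.segment_of_eq {f : ℕ → V} {n i j : ℕ} {a b : V} (hw : IsWalk E f n a b)
    (hij : i ≤ j) (hj : j ≤ n) (he : f i = f j) :
    IsWalk E (fun s => f (i + s)) (j - i) (f i) (f i) := by
  simpa only [← he] using hw.segment hij hj

theorem IsWalk.reach_of_le {f : ℕ → V} {n i j : ℕ} {a b : V} (hw : IsWalk E f n a b)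
    (hij : i ≤ j) (hj : j ≤ n) : Reach E (f i) (f j) := by
  induction j, hij using Nat.le_induction with
  | base => exact .refl
  | succ j hij ih => exact (ih (by omega)).tail (hw.2.2 j (by omega))

theorem IsWalk.reach {f : ℕ → V} {n : ℕ} {a b : V} (hw : IsWalk E f n a b) : Reach E a b := by
  simpa only [hw.1, hw.2.1] using hw.reach_of_le (Nat.zero_le n) le_rfl

theorem SameCycle.refl (v : V) : SameCycle E v v := ⟨.refl, .refl⟩

theorem SameCycle.symm {u v : V} (h : SameCycle E u v) : SameCycle E v u := ⟨h.2, h.1⟩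

theorem SameCycle.trans {u v w : V} (h₁ : SameCycle E u v) (h₂ : SameCycle E v w) :
    SameCycle E u w :=
  ⟨h₁.1.trans h₂.1, h₂.2.trans h₁.2⟩

theorem IsWalk.sameCycle_of_closed {z : ℕ → V} {p t : ℕ} {v : V} (hz : IsWalk E z p v v)
    (ht : t ≤ p) : SameCycle E (z t) v :=
  ⟨by simpa only [hz.2.1] using hz.reach_of_le ht le_rfl,
    by simpa only [hz.1] using hz.reach_of_le (Nat.zero_le t) ht⟩

theorem IsWalk.cyclic {z : ℕ → V} {p : ℕ} {v : V} (hz : IsWalk E z p v v) (hp : 0 < p) :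
    Cyclic E v :=
  ⟨z 1, by simpa only [hz.1] using hz.2.2 0 hp,
    by simpa only [hz.2.1] using hz.reach_of_le hp le_rfl⟩

theorem IsWalk.cyclic_of_eq {f : ℕ → V} {n i j : ℕ} {a b : V} (hw : IsWalk E f n a b)
    (hij : i < j) (hj : j ≤ n) (he : f i = f j) : Cyclic E (f i) :=
  (hw.segment_of_eq hij.le hj he).cyclic (by omega)

theorem Cyclic.of_sameCycle {u v : V} (hu : Cyclic E u) (huv : SameCycle E u v) : Cyclic E v := by
  rcases Relation.ReflTransGen.cases_head huv.2 with rfl | ⟨w, hvw, hwu⟩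
  · exact hu
  · exact ⟨w, hvw, hwu.trans huv.1⟩

def walkAppend (f : ℕ → V) (n : ℕ) (g : ℕ → V) : ℕ → V :=
  fun t => if t ≤ n then f t else g (t - n)

theorem walkAppend_of_le {f g : ℕ → V} {n t : ℕ} (ht : t ≤ n) : walkAppend f n g t = f t :=
  if_pos ht

theorem walkAppend_add {f g : ℕ → V} {n : ℕ} (hfg : f n = g 0) (s : ℕ) :
    walkAppend f n g (n + s) = g s := by
  rcases Nat.eq_zero_or_pos s with rfl | hs
  · simpa [walkAppend] using hfg
  · simp [walkAppend, show ¬ n + s ≤ n by omega]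

theorem IsWalk.append {f g : ℕ → V} {n m : ℕ} {a b c : V} (hf : IsWalk E f n a b)
    (hg : IsWalk E g m b c) : IsWalk E (walkAppend f n g) (n + m) a c := by
  have hfg : f n = g 0 := hf.2.1.trans hg.1.symm
  refine ⟨(walkAppend_of_le (Nat.zero_le n)).trans hf.1, (walkAppend_add hfg m).trans hg.2.1,
    fun i hi => ?_⟩
  rcases lt_or_ge i n with hin | hin
  · rw [walkAppend_of_le hin.le, walkAppend_of_le hin]
    exact hf.2.2 i hin
  · obtain ⟨s, rfl⟩ := Nat.exists_eq_add_of_le hin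
    rw [walkAppend_add hfg, add_assoc, walkAppend_add hfg]
    exact hg.2.2 s (by omega)

theorem exists_isWalk_of_reach {a b : V} (h : Reach E a b) : ∃ f n, IsWalk E f n a b := by
  induction h with
  | refl => exact ⟨fun _ => a, 0, rfl, rfl, fun i hi => absurd hi (Nat.not_lt_zero i)⟩
  | tail _ hbc ih =>
    obtain ⟨f, n, hf⟩ := ih
    exact ⟨_, _, hf.append (isWalk_edge hbc)⟩

theorem walkDisp_congr {f g : ℕ → V} {n : ℕ} (hfg : ∀ i ≤ n, f i = g i) :
    WalkDisp lab f n = WalkDisp lab g n :=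
  Finset.sum_congr rfl fun i hi => by
    rw [Finset.mem_range] at hi
    rw [hfg i hi.le, hfg (i + 1) hi]

theorem walkDisp_split (f : ℕ → V) {i j : ℕ} (hij : i ≤ j) :
    WalkDisp lab f j = WalkDisp lab f i + WalkDisp lab (fun s => f (i + s)) (j - i) := by
  obtain ⟨d, rfl⟩ := Nat.exists_eq_add_of_le hij
  rw [Nat.add_sub_cancel_left]
  exact Finset.sum_range_add _ _ _

theorem walkDisp_append {f g : ℕ → V} {n : ℕ} (hfg : f n = g 0) (m : ℕ) :
    WalkDisp lab (walkAppend f n g) (n + m) = WalkDisp lab f n + WalkDisp lab g m := by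
  rw [walkDisp_split lab _ (Nat.le_add_right n m), Nat.add_sub_cancel_left]
  congr 1
  · exact walkDisp_congr lab fun i hi => walkAppend_of_le hi
  · exact walkDisp_congr lab fun s _ => walkAppend_add hfg s

theorem IsWalk.walkDisp_append {f g : ℕ → V} {n m : ℕ} {a b c : V} (hf : IsWalk E f n a b)
    (hg : IsWalk E g m b c) :
    WalkDisp lab (walkAppend f n g) (n + m) = WalkDisp lab f n + WalkDisp lab g m :=
  _root_.walkDisp_append lab (hf.2.1.trans hg.1.symm) m

def walkPow (z : ℕ → V) (p : ℕ) : ℕ → V := fun t => z (t % p)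

theorem walkPow_mul_add (z : ℕ → V) (p k t : ℕ) : walkPow z p (k * p + t) = walkPow z p t := by
  simp only [walkPow, add_comm (k * p), Nat.add_mul_mod_self_right]

theorem walkPow_of_le {z : ℕ → V} {p t : ℕ} (hzp : z 0 = z p) (ht : t ≤ p) :
    walkPow z p t = z t := by
  rcases ht.lt_or_eq with ht | rfl
  · simp only [walkPow, Nat.mod_eq_of_lt ht]
  · simp only [walkPow, Nat.mod_self, hzp]

theorem IsWalk.pow {z : ℕ → V} {p : ℕ} {v : V} (hz : IsWalk E z p v v) (hp : 0 < p) (k : ℕ) :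
    IsWalk E (walkPow z p) (k * p) v v := by
  have hzp : z 0 = z p := hz.1.trans hz.2.1.symm
  have hzero : walkPow z p 0 = v := (walkPow_of_le hzp (Nat.zero_le p)).trans hz.1
  refine ⟨hzero, by rw [← add_zero (k * p), walkPow_mul_add, hzero], fun i _ => ?_⟩
  have hlt := Nat.mod_lt i hp
  rw [← Nat.div_add_mod' i p, walkPow_mul_add, add_assoc, walkPow_mul_add,
    walkPow_of_le hzp hlt.le, walkPow_of_le hzp hlt]
  exact hz.2.2 _ hlt

theorem walkDisp_pow {z : ℕ → V} {p : ℕ} (hzp : z 0 = z p) (k : ℕ) :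
    WalkDisp lab (walkPow z p) (k * p) = k • WalkDisp lab z p := by
  induction k with
  | zero => simp [WalkDisp]
  | succ k ih =>
    rw [walkDisp_split lab _ (Nat.mul_le_mul_right p k.le_succ), ih, succ_nsmul,
      show (k + 1) * p - k * p = p by rw [add_one_mul, Nat.add_sub_cancel_left]]
    congr 1
    exact walkDisp_congr lab fun s hs => by rw [walkPow_mul_add, walkPow_of_le hzp hs]

def walkInsert (h : ℕ → V) (i : ℕ) (z : ℕ → V) (p : ℕ) : ℕ → V :=
  walkAppend h i (walkAppend z p fun s => h (i + s))

theorem walkInsert_of_le {h z : ℕ → V} {i p t : ℕ} (ht : t ≤ i) : walkInsert h i z p t = h t :=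
  walkAppend_of_le ht

theorem walkInsert_of_le_of_le {h z : ℕ → V} {i p t : ℕ} (hz : z 0 = h i) (hit : i ≤ t)
    (hti : t ≤ i + p) : walkInsert h i z p t = z (t - i) := by
  obtain ⟨s, rfl⟩ := Nat.exists_eq_add_of_le hit
  rw [walkInsert, walkAppend_add (by rw [walkAppend_of_le (Nat.zero_le p), hz]),
    walkAppend_of_le (by omega), Nat.add_sub_cancel_left]

theorem IsWalk.insert {h z : ℕ → V} {n i p : ℕ} {a b : V} (hh : IsWalk E h n a b) (hi : i ≤ n)
    (hz : IsWalk E z p (h i) (h i)) : IsWalk E (walkInsert h i z p) (n + p) a b := by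
  have hseg := hh.segment hi le_rfl
  rw [hh.2.1] at hseg
  have := (hh.prefix hi).append (hz.append hseg)
  rwa [show i + (p + (n - i)) = n + p by omega] at this

theorem walkDisp_insert {h z : ℕ → V} {n i p : ℕ} (hi : i ≤ n) (hz₀ : z 0 = h i)
    (hzp : z p = h i) :
    WalkDisp lab (walkInsert h i z p) (n + p) = WalkDisp lab h n + WalkDisp lab z p := by
  rw [show n + p = i + (p + (n - i)) by omega, walkInsert,
    walkDisp_append lab (by rw [walkAppend_of_le (Nat.zero_le p), hz₀]),
    walkDisp_append lab (show z p = h (i + 0) from hzp),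
    walkDisp_split lab h hi]
  abel

def eraseLoop (g : ℕ → V) (a b : ℕ) : ℕ → V := walkAppend g a fun s => g (b + s)

theorem eraseLoop_of_le {g : ℕ → V} {a b t : ℕ} (ht : t ≤ a) : eraseLoop g a b t = g t :=
  walkAppend_of_le ht

theorem eraseLoop_add {g : ℕ → V} {a b : ℕ} (he : g a = g b) (s : ℕ) :
    eraseLoop g a b (a + s) = g (b + s) :=
  walkAppend_add he s

theorem isWalk_eraseLoop {g : ℕ → V} {n a b : ℕ} {u w : V} (hg : IsWalk E g n u w) (hab : a ≤ b)
    (hb : b ≤ n) (he : g a = g b) : IsWalk E (eraseLoop g a b) (a + (n - b)) u w := by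
  have hseg := hg.segment hb le_rfl
  rw [← he, hg.2.1] at hseg
  exact (hg.prefix (hab.trans hb)).append hseg

theorem walkDisp_eraseLoop {g : ℕ → V} {n a b : ℕ} (hab : a ≤ b) (hb : b ≤ n) (he : g a = g b) :
    WalkDisp lab g n = WalkDisp lab (eraseLoop g a b) (a + (n - b)) +
      WalkDisp lab (fun s => g (a + s)) (b - a) := by
  rw [eraseLoop, walkDisp_append lab he, walkDisp_split lab g hb,
    walkDisp_split lab g hab]
  abel

theorem exists_lt_of_not_injOn {g : ℕ → V} {n : ℕ} (h : ¬ Set.InjOn g (Set.Iic n)) :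
    ∃ a b, a < b ∧ b ≤ n ∧ g a = g b := by
  simp only [Set.InjOn, Set.mem_Iic, not_forall] at h
  obtain ⟨i, hi, j, hj, he, hne⟩ := h
  rcases lt_or_gt_of_ne hne with hij | hij
  · exact ⟨i, j, hij, hj, he⟩
  · exact ⟨j, i, hij, hi, he.symm⟩

@[elab_as_elim]
theorem IsWalk.induction_on_loops {u w : V} {P : (ℕ → V) → ℕ → Prop}
    (simple : ∀ g n, IsWalk E g n u w → Set.InjOn g (Set.Iic n) → P g n)
    (loop : ∀ g n a b, IsWalk E g n u w → a < b → b ≤ n → g a = g b →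
      P (eraseLoop g a b) (a + (n - b)) → P g n)
    {g : ℕ → V} {n : ℕ} (hg : IsWalk E g n u w) : P g n := by
  induction n using Nat.strong_induction_on generalizing g with
  | _ n ih =>
    by_cases hinj : Set.InjOn g (Set.Iic n)
    · exact simple g n hg hinj
    · obtain ⟨a, b, hab, hb, he⟩ := exists_lt_of_not_injOn hinj
      exact loop g n a b hg hab hb he (ih _ (by omega) (isWalk_eraseLoop hg hab.le hb he))

theorem IsWalk.exists_injOn {f : ℕ → V} {n : ℕ} {u w : V} (hf : IsWalk E f n u w) :
    ∃ h nh, IsWalk E h nh u w ∧ Set.InjOn h (Set.Iic nh) :=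
  IsWalk.induction_on_loops (fun g n hg hinj => ⟨g, n, hg, hinj⟩) (fun _ _ _ _ _ _ _ _ ih => ih) hf

end Walks

theorem exists_zsmul_eq_zsmul_of_mul_eq_mul {b c : ℤ × ℤ} (hb : b ≠ 0) (hc : c ≠ 0)
    (hbc : b.1 * c.2 = b.2 * c.1) : ∃ P Q : ℤ, P ≠ 0 ∧ Q ≠ 0 ∧ P • b = Q • c := by
  obtain ⟨b₁, b₂⟩ := b
  obtain ⟨c₁, c₂⟩ := c
  simp only [ne_eq, Prod.mk_eq_zero, not_and_or] at hb hc hbc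
  by_cases hb₁ : b₁ = 0
  · subst hb₁
    have hb₂ : b₂ ≠ 0 := by tauto
    have hc₁ : c₁ = 0 := by simpa [hb₂] using hbc.symm
    subst hc₁
    exact ⟨c₂, b₂, by tauto, hb₂, by simp [mul_comm]⟩
  · have hc₁ : c₁ ≠ 0 := by
      rintro rfl
      simp_all
    exact ⟨c₁, b₁, hc₁, hb₁, by simp [mul_comm, hbc]⟩

theorem exists_nsmul_of_zsmul_eq_zsmul {b c : ℤ × ℤ} {P Q : ℤ} (hP : P ≠ 0) (hQ : Q ≠ 0)
    (hPQ : P • b = Q • c) :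
    ∃ p q : ℕ, 0 < p ∧ 0 < q ∧ (p • b = q • c ∨ p • b + q • c = 0) := by
  refine ⟨P.natAbs, Q.natAbs, Int.natAbs_pos.2 hP, Int.natAbs_pos.2 hQ, ?_⟩
  rcases Int.natAbs_eq P with hP' | hP' <;> rcases Int.natAbs_eq Q with hQ' | hQ' <;>
    rw [hP', hQ'] at hPQ <;> simp only [neg_smul, natCast_zsmul] at hPQ
  · exact .inl hPQ
  · exact .inr (eq_neg_iff_add_eq_zero.mp hPQ)
  · exact .inr (neg_eq_iff_add_eq_zero.mp hPQ)
  · exact .inl (neg_inj.mp hPQ)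

section Quipu

variable {V : Type} {E : V → V → Prop} (lab : V → V → ℤ × ℤ) {r x : V} {h : ℕ → V}
  {nh i j p₁ p₂ : ℕ} {z₁ z₂ : ℕ → V}

def WalkDispInjective (E : V → V → Prop) (lab : V → V → ℤ × ℤ) (r : V) : Prop :=
  ∀ (f g : ℕ → V) (n k : ℕ) (x y : V), IsWalk E f n r x → IsWalk E g k r y →
    WalkDisp lab f n = WalkDisp lab g k → n = k ∧ ∀ i ≤ n, f i = g i

def IsShortestClosedWalk (E : V → V → Prop) (z : ℕ → V) (p : ℕ) (v : V) : Prop :=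
  0 < p ∧ IsWalk E z p v v ∧ ∀ z' p', 0 < p' → IsWalk E z' p' v v → p ≤ p'

def IsUniquePath (E : V → V → Prop) (h : ℕ → V) (nh : ℕ) (r x : V) : Prop :=
  IsWalk E h nh r x ∧ Set.InjOn h (Set.Iic nh) ∧
    ∀ f n, IsWalk E f n r x → Set.InjOn f (Set.Iic n) → n = nh ∧ ∀ i ≤ n, f i = h i

theorem Cyclic.exists_isShortestClosedWalk {v : V} (hv : Cyclic E v) :
    ∃ z p, IsShortestClosedWalk E z p v := by
  classical
  obtain ⟨w, hvw, hwv⟩ := hv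
  obtain ⟨f, n, hf⟩ := exists_isWalk_of_reach hwv
  have hex : ∃ p, 0 < p ∧ ∃ z, IsWalk E z p v v := ⟨1 + n, by omega, _, (isWalk_edge hvw).append hf⟩
  obtain ⟨hp, z, hz⟩ := Nat.find_spec hex
  exact ⟨z, Nat.find hex, hp, hz, fun z' p' hp' hz' => Nat.find_min' hex ⟨hp', z', hz'⟩⟩

theorem IsShortestClosedWalk.exists_walkDisp_eq_nsmul (hdet : WalkDispInjective E lab r)
    {z : ℕ → V} {p : ℕ} {v : V} (hz : IsShortestClosedWalk E z p v) (hr : Reach E r v)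
    {g : ℕ → V} {n : ℕ} (hg : IsWalk E g n v v) :
    ∃ k : ℕ, WalkDisp lab g n = k • WalkDisp lab z p ∧ n = k * p := by
  obtain ⟨hp, hzw, hmin⟩ := hz
  obtain ⟨q, m, hq⟩ := exists_isWalk_of_reach hr
  induction n using Nat.strong_induction_on generalizing g with
  | _ n ih =>
  rcases Nat.eq_zero_or_pos n with rfl | hn
  · exact ⟨0, by simp [WalkDisp], by simp⟩
  have hpn : p ≤ n := hmin g n hn hg
  -- the rooted walks `q g z` and `q z g` have the same displacement, so they coincide
  have hsame := hdet _ _ _ _ v v ((hq.append hg).append hzw) ((hq.append hzw).append hg) (by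
    rw [(hq.append hg).walkDisp_append lab hzw, hq.walkDisp_append lab hg,
      (hq.append hzw).walkDisp_append lab hg, hq.walkDisp_append lab hzw]
    abel)
  have hgz : ∀ t ≤ p, g t = z t := fun t ht => by
    have := hsame.2 (m + t) (by omega)
    rwa [walkAppend_of_le (show m + t ≤ m + n by omega),
      walkAppend_of_le (show m + t ≤ m + p by omega), walkAppend_add (hq.2.1.trans hg.1.symm),
      walkAppend_add (hq.2.1.trans hzw.1.symm)] at this
  have htail := hg.segment hpn le_rfl
  rw [hgz p le_rfl, hzw.2.1, hg.2.1] at htail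
  obtain ⟨k, hk, hkn⟩ := ih (n - p) (by omega) htail
  refine ⟨k + 1, ?_, by rw [add_one_mul]; omega⟩
  rw [walkDisp_split lab g hpn, hk, walkDisp_congr lab hgz, succ_nsmul']

theorem IsShortestClosedWalk.exists_walkDisp_eq_nsmul_of_sameCycle
    (hdet : WalkDispInjective E lab r) {z : ℕ → V} {p : ℕ} {u v : V}
    (hz : IsShortestClosedWalk E z p v) (hr : Reach E r v) (huv : SameCycle E u v)
    {g : ℕ → V} {n : ℕ} (hg : IsWalk E g n u u) :
    ∃ k : ℕ, WalkDisp lab g n = k • WalkDisp lab z p := by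
  obtain ⟨q, a, hq⟩ := exists_isWalk_of_reach huv.2
  obtain ⟨q', a', hq'⟩ := exists_isWalk_of_reach huv.1
  obtain ⟨k₀, hd₀, hl₀⟩ := hz.exists_walkDisp_eq_nsmul lab hdet hr (hq.append hq')
  obtain ⟨k₁, hd₁, hl₁⟩ := hz.exists_walkDisp_eq_nsmul lab hdet hr (hq.append (hg.append hq'))
  obtain ⟨d, rfl⟩ : ∃ d, k₁ = k₀ + d :=
    Nat.exists_eq_add_of_le (Nat.le_of_mul_le_mul_right (by omega) hz.1)
  rw [hq.walkDisp_append lab hq'] at hd₀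
  rw [hq.walkDisp_append lab (hg.append hq'), hg.walkDisp_append lab hq', add_nsmul, ← hd₀] at hd₁
  refine ⟨d, add_left_cancel (a := WalkDisp lab q a + WalkDisp lab q' a') ?_⟩
  rw [← hd₁]
  abel

theorem IsUniquePath.exists_sameCycle (hh : IsUniquePath E h nh r x) {g : ℕ → V} {n : ℕ}
    (hg : IsWalk E g n r x) : ∀ t ≤ n, ∃ k ≤ nh, SameCycle E (g t) (h k) := by
  refine IsWalk.induction_on_loops (fun g n hg hinj => ?_) (fun g n a b hg hab hb he ih => ?_) hg
  · obtain ⟨rfl, hgh⟩ := hh.2.2 g n hg hinj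
    exact fun t ht => ⟨t, ht, hgh t ht ▸ SameCycle.refl _⟩
  intro t ht
  rcases le_or_gt t a with hta | hta
  · simpa only [eraseLoop_of_le hta] using ih t (by omega)
  rcases lt_or_ge t b with htb | htb
  · obtain ⟨k, hk, hs⟩ := ih a (by omega)
    rw [eraseLoop_of_le le_rfl] at hs
    have hloop := (hg.segment_of_eq hab.le hb he).sameCycle_of_closed (t := t - a) (by omega)
    rw [Nat.add_sub_cancel' hta.le] at hloop
    exact ⟨k, hk, hloop.trans hs⟩
  · obtain ⟨k, hk, hs⟩ := ih (a + (t - b)) (by omega)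
    rw [eraseLoop_add he, Nat.add_sub_cancel' htb] at hs
    exact ⟨k, hk, hs⟩

theorem IsUniquePath.exists_cyclic_sameCycle (hh : IsUniquePath E h nh r x) {f : ℕ → V}
    {n t : ℕ} (hf : IsWalk E f n r x) (ht : t ≤ n) (hc : Cyclic E (f t)) :
    ∃ k ≤ nh, Cyclic E (h k) ∧ SameCycle E (f t) (h k) := by
  obtain ⟨k, hk, hs⟩ := hh.exists_sameCycle hf t ht
  exact ⟨k, hk, hc.of_sameCycle hs, hs⟩

theorem IsUniquePath.cover_eq_singleton (hh : IsUniquePath E h nh r x)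
    (hacyc : ∀ f n, IsWalk E f n r x → ∀ i ≤ n, ¬ Cyclic E (f i)) :
    Cover E lab r x = {WalkDisp lab h nh} := by
  ext s
  refine ⟨?_, fun hs => ⟨h, nh, hh.1, hs⟩⟩
  rintro ⟨f, n, hf, rfl⟩
  have hinj : Set.InjOn f (Set.Iic n) := by
    by_contra hni
    obtain ⟨a, b, hab, hb, he⟩ := exists_lt_of_not_injOn hni
    exact hacyc f n hf a (by omega) (hf.cyclic_of_eq hab hb he)
  obtain ⟨rfl, hfh⟩ := hh.2.2 f n hf hinj
  exact walkDisp_congr lab hfh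

theorem IsUniquePath.exists_walkDisp_eq (hdet : WalkDispInjective E lab r)
    (hh : IsUniquePath E h nh r x) (hi : i ≤ nh) (hj : j ≤ nh)
    (hz₁ : IsShortestClosedWalk E z₁ p₁ (h i)) (hz₂ : IsShortestClosedWalk E z₂ p₂ (h j))
    (hB : ∀ k ≤ nh, Cyclic E (h k) → SameCycle E (h k) (h i) ∨ SameCycle E (h k) (h j))
    {g : ℕ → V} {n : ℕ} (hg : IsWalk E g n r x) :
    ∃ m k : ℕ, WalkDisp lab g n =
      WalkDisp lab h nh + m • WalkDisp lab z₁ p₁ + k • WalkDisp lab z₂ p₂ := by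
  refine IsWalk.induction_on_loops (fun g n hg hinj => ⟨0, 0, ?_⟩)
    (fun g n a b hg hab hb he ih => ?_) hg
  · obtain ⟨rfl, hgh⟩ := hh.2.2 g n hg hinj
    simp [walkDisp_congr lab hgh]
  obtain ⟨m, k, hmk⟩ := ih
  have hloop := hg.segment_of_eq hab.le hb he
  obtain ⟨c, hc, hs⟩ := hh.exists_sameCycle hg a (by omega)
  rw [walkDisp_eraseLoop lab hab.le hb he, hmk]
  rcases hB c hc ((hloop.cyclic (by omega)).of_sameCycle hs) with hci | hcj
  · obtain ⟨d, hd⟩ := hz₁.exists_walkDisp_eq_nsmul_of_sameCycle lab hdet (hh.1.prefix hi).reach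
      (hs.trans hci) hloop
    exact ⟨m + d, k, by rw [hd, add_nsmul]; abel⟩
  · obtain ⟨d, hd⟩ := hz₂.exists_walkDisp_eq_nsmul_of_sameCycle lab hdet (hh.1.prefix hj).reach
      (hs.trans hcj) hloop
    exact ⟨m, k + d, by rw [hd, add_nsmul]; abel⟩

theorem IsWalk.exists_insert_two {n : ℕ} {a b : V} (hh : IsWalk E h n a b) (hi : i ≤ n)
    (hj : j ≤ n) (hz₁ : IsWalk E z₁ p₁ (h i) (h i)) (hz₂ : IsWalk E z₂ p₂ (h j) (h j)) :
    ∃ g, IsWalk E g (n + (p₁ + p₂)) a b ∧ WalkDisp lab g (n + (p₁ + p₂)) =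
      WalkDisp lab h n + WalkDisp lab z₁ p₁ + WalkDisp lab z₂ p₂ := by
  wlog hij : i ≤ j generalizing i j z₁ z₂ p₁ p₂
  · obtain ⟨g, hg, hd⟩ := this hj hi hz₂ hz₁ (by omega)
    exact ⟨g, by rwa [add_comm p₁], by rw [add_comm p₁, hd]; abel⟩
  have hz₁' : IsWalk E z₁ p₁ (walkInsert h j z₂ p₂ i) (walkInsert h j z₂ p₂ i) := by
    rwa [walkInsert_of_le hij]
  refine ⟨walkInsert (walkInsert h j z₂ p₂) i z₁ p₁, ?_, ?_⟩
  · have := (hh.insert hj hz₂).insert (by omega) hz₁'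
    rwa [show n + p₂ + p₁ = n + (p₁ + p₂) by omega] at this
  · rw [show n + (p₁ + p₂) = n + p₂ + p₁ by omega, walkDisp_insert lab (by omega) hz₁'.1 hz₁'.2.1,
      walkDisp_insert lab hj hz₂.1 hz₂.2.1]
    abel

theorem IsUniquePath.cover_eq (hdet : WalkDispInjective E lab r)
    (hh : IsUniquePath E h nh r x) (hi : i ≤ nh) (hj : j ≤ nh)
    (hz₁ : IsShortestClosedWalk E z₁ p₁ (h i)) (hz₂ : IsShortestClosedWalk E z₂ p₂ (h j))
    (hB : ∀ k ≤ nh, Cyclic E (h k) → SameCycle E (h k) (h i) ∨ SameCycle E (h k) (h j)) :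
    Cover E lab r x = {s | ∃ mn : ℕ × ℕ,
      s = WalkDisp lab h nh + mn.1 • WalkDisp lab z₁ p₁ + mn.2 • WalkDisp lab z₂ p₂} := by
  ext s
  constructor
  · rintro ⟨g, n, hg, rfl⟩
    obtain ⟨m, k, hmk⟩ := hh.exists_walkDisp_eq lab hdet hi hj hz₁ hz₂ hB hg
    exact ⟨(m, k), hmk⟩
  · rintro ⟨⟨m, k⟩, rfl⟩
    have hzp₁ := hz₁.2.1.1.trans hz₁.2.1.2.1.symm
    have hzp₂ := hz₂.2.1.1.trans hz₂.2.1.2.1.symm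
    obtain ⟨g, hg, hd⟩ :=
      hh.1.exists_insert_two lab hi hj (hz₁.2.1.pow hz₁.1 m) (hz₂.2.1.pow hz₂.1 k)
    exact ⟨g, _, hg, by rw [hd, walkDisp_pow lab hzp₁, walkDisp_pow lab hzp₂]⟩

theorem IsUniquePath.cover_eq_of_sameCycle (hdet : WalkDispInjective E lab r)
    (hh : IsUniquePath E h nh r x) (hi : i ≤ nh) (hz : IsShortestClosedWalk E z₁ p₁ (h i))
    (hB : ∀ k ≤ nh, Cyclic E (h k) → SameCycle E (h k) (h i)) :
    Cover E lab r x = {s | ∃ n : ℕ, s = WalkDisp lab h nh + n • WalkDisp lab z₁ p₁} := by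
  rw [hh.cover_eq lab hdet hi hi hz hz fun k hk hck => .inl (hB k hk hck)]
  ext s
  exact ⟨fun ⟨mn, hs⟩ => ⟨mn.1 + mn.2, by rw [hs, add_nsmul, add_assoc]⟩,
    fun ⟨n, hs⟩ => ⟨(n, 0), by simp [hs]⟩⟩

theorem walkDisp_ne_of_not_sameCycle (hdet : WalkDispInjective E lab r)
    (hh : IsWalk E h nh r x) (hinj : Set.InjOn h (Set.Iic nh)) (hi : i ≤ nh) (hj : j ≤ nh)
    (hns : ¬ SameCycle E (h i) (h j)) (hz₁ : IsWalk E z₁ p₁ (h i) (h i))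
    (hz₂ : IsWalk E z₂ p₂ (h j) (h j)) (hp₁ : 0 < p₁) (hp₂ : 0 < p₂) :
    WalkDisp lab z₁ p₁ ≠ WalkDisp lab z₂ p₂ := by
  wlog hij : i ≤ j generalizing i j z₁ z₂ p₁ p₂
  · exact fun he => this hj hi (fun hs => hns hs.symm) hz₂ hz₁ hp₂ hp₁ (by omega) he.symm
  intro he
  obtain ⟨-, hpt⟩ := hdet _ _ _ _ x x (hh.insert hi hz₁) (hh.insert hj hz₂) (by
    rw [walkDisp_insert lab hi hz₁.1 hz₁.2.1, walkDisp_insert lab hj hz₂.1 hz₂.2.1, he])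
  rcases lt_or_ge j (i + p₁) with hji | hji
  · -- at time `j + 1` the first walk is on the loop at `h i`, the second on the loop at `h j`
    have hat := hpt (j + 1) (by omega)
    rw [walkInsert_of_le_of_le hz₁.1 (by omega) (by omega),
      walkInsert_of_le_of_le hz₂.1 (by omega) (by omega)] at hat
    have hs₁ := hz₁.sameCycle_of_closed (t := j + 1 - i) (by omega)
    have hs₂ := hz₂.sameCycle_of_closed (t := j + 1 - j) (by omega)
    rw [hat] at hs₁
    exact hns (hs₁.symm.trans hs₂)
  · -- at time `i + p₁` the first walk is back at `h i`, the second is still on `h`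
    have hat := hpt (i + p₁) (by omega)
    rw [walkInsert_of_le_of_le hz₁.1 (by omega) le_rfl, walkInsert_of_le hji,
      Nat.add_sub_cancel_left, hz₁.2.1] at hat
    have := hinj (Set.mem_Iic.2 hi) (Set.mem_Iic.2 (by omega)) hat
    omega

theorem walkDisp_add_ne_zero (hdet : WalkDispInjective E lab r) (hh : IsWalk E h nh r x)
    (hi : i ≤ nh) (hj : j ≤ nh) (hz₁ : IsWalk E z₁ p₁ (h i) (h i))
    (hz₂ : IsWalk E z₂ p₂ (h j) (h j)) (hp : 0 < p₁ + p₂) :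
    WalkDisp lab z₁ p₁ + WalkDisp lab z₂ p₂ ≠ 0 := by
  intro h0
  obtain ⟨g, hg, hd⟩ := hh.exists_insert_two lab hi hj hz₁ hz₂
  have := (hdet _ _ _ _ x x hg hh (by rw [hd, add_assoc, h0, add_zero])).1
  omega

theorem cross_ne_of_not_sameCycle (hdet : WalkDispInjective E lab r)
    (hh : IsWalk E h nh r x) (hinj : Set.InjOn h (Set.Iic nh)) (hi : i ≤ nh) (hj : j ≤ nh)
    (hns : ¬ SameCycle E (h i) (h j)) (hz₁ : IsWalk E z₁ p₁ (h i) (h i))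
    (hz₂ : IsWalk E z₂ p₂ (h j) (h j)) (hp₁ : 0 < p₁) (hp₂ : 0 < p₂)
    (hb : WalkDisp lab z₁ p₁ ≠ 0) (hc : WalkDisp lab z₂ p₂ ≠ 0) :
    (WalkDisp lab z₁ p₁).1 * (WalkDisp lab z₂ p₂).2 ≠
      (WalkDisp lab z₁ p₁).2 * (WalkDisp lab z₂ p₂).1 := by
  intro hcol
  obtain ⟨P, Q, hP, hQ, hPQ⟩ := exists_zsmul_eq_zsmul_of_mul_eq_mul hb hc hcol
  obtain ⟨p, q, hp, hq, hpq⟩ := exists_nsmul_of_zsmul_eq_zsmul hP hQ hPQ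
  have hpow₁ := hz₁.pow hp₁ p
  have hpow₂ := hz₂.pow hp₂ q
  rw [← walkDisp_pow lab (hz₁.1.trans hz₁.2.1.symm),
    ← walkDisp_pow lab (hz₂.1.trans hz₂.2.1.symm)] at hpq
  rcases hpq with hpq | hpq
  · exact walkDisp_ne_of_not_sameCycle lab hdet hh hinj hi hj hns hpow₁ hpow₂
      (Nat.mul_pos hp hp₁) (Nat.mul_pos hq hp₂) hpq
  · exact walkDisp_add_ne_zero lab hdet hh hi hj hpow₁ hpow₂ (by positivity) hpq

end Quipu

theorem stmt17_general {V : Type} (E : V → V → Prop) (r : V)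
    (lab : V → V → ℤ × ℤ)
    -- from the root there is a (unique) path to each vertex
    (hreach : ∀ x : V, ∃ (f : ℕ → V) (n : ℕ), IsWalk E f n r x)
    (huniq : ∀ (x : V) (f g : ℕ → V) (n k : ℕ), IsWalk E f n r x → IsWalk E g k r x →
      (∀ i j, i ≤ n → j ≤ n → f i = f j → i = j) →
      (∀ i j, i ≤ k → j ≤ k → g i = g j → i = j) →
      n = k ∧ ∀ i ≤ n, f i = g i)
    -- every cycle has a nonzero displacement vector
    (hcyc : ∀ (v : V) (f : ℕ → V) (n : ℕ), 0 < n → IsWalk E f n v v →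
      WalkDisp lab f n ≠ 0)
    -- every rooted walk meets at most two cycles
    (htwo : ∀ (x : V) (f : ℕ → V) (n : ℕ), IsWalk E f n r x →
      ∀ i j k, i ≤ n → j ≤ n → k ≤ n →
        Cyclic E (f i) → Cyclic E (f j) → Cyclic E (f k) →
        SameCycle E (f i) (f j) ∨ SameCycle E (f i) (f k) ∨ SameCycle E (f j) (f k))
    -- distinct rooted walks have distinct displacement vectors
    (hdistinct : ∀ (f g : ℕ → V) (n k : ℕ) (x y : V),
      IsWalk E f n r x → IsWalk E g k r y → WalkDisp lab f n = WalkDisp lab g k →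
      n = k ∧ ∀ i ≤ n, f i = g i) :
    ∀ x : V,
      -- zero cycles met: the cover is a singleton
      ((∀ (f : ℕ → V) (n : ℕ), IsWalk E f n r x → ∀ i ≤ n, ¬ Cyclic E (f i)) →
        ∃ a : ℤ × ℤ, Cover E lab r x = {a}) ∧
      -- exactly one cycle met: the cover is a + ℕ·b
      (((∃ (f : ℕ → V) (n : ℕ), IsWalk E f n r x ∧ ∃ i ≤ n, Cyclic E (f i)) ∧
        (∀ (f : ℕ → V) (n : ℕ), IsWalk E f n r x → ∀ i j, i ≤ n → j ≤ n →
          Cyclic E (f i) → Cyclic E (f j) → SameCycle E (f i) (f j))) →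
        ∃ a b : ℤ × ℤ, b ≠ 0 ∧
          Cover E lab r x = {s | ∃ n : ℕ, s = a + n • b}) ∧
      -- two cycles met: the cover is a + ℕ·b + ℕ·c
      ((∃ (f : ℕ → V) (n : ℕ), IsWalk E f n r x ∧ ∃ i j, i ≤ n ∧ j ≤ n ∧
          Cyclic E (f i) ∧ Cyclic E (f j) ∧ ¬ SameCycle E (f i) (f j)) →
        ∃ a b c : ℤ × ℤ, b ≠ 0 ∧ c ≠ 0 ∧ b.1 * c.2 ≠ b.2 * c.1 ∧
          Cover E lab r x = {s | ∃ mn : ℕ × ℕ, s = a + mn.1 • b + mn.2 • c}) := by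
  intro x
  obtain ⟨f₀, n₀, hf₀⟩ := hreach x
  obtain ⟨h, nh, hh, hinj⟩ := hf₀.exists_injOn
  have hpath : IsUniquePath E h nh r x := ⟨hh, hinj, fun f n hf hfi =>
    huniq x f h n nh hf hh (fun i j hi hj => hfi hi hj) (fun i j hi hj => hinj hi hj)⟩
  refine ⟨fun hacyc => ⟨_, hpath.cover_eq_singleton lab hacyc⟩, ?_, ?_⟩
  · rintro ⟨⟨f, n, hf, i, hi, hfi⟩, hone⟩
    obtain ⟨k, hk, hck, -⟩ := hpath.exists_cyclic_sameCycle hf hi hfi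
    obtain ⟨z, p, hz⟩ := hck.exists_isShortestClosedWalk
    exact ⟨_, _, hcyc _ z p hz.1 hz.2.1, hpath.cover_eq_of_sameCycle lab hdistinct hk hz
      fun j hj hcj => hone h nh hh j k hj hk hcj hck⟩
  · rintro ⟨f, n, hf, i, j, hi, hj, hfi, hfj, hns⟩
    obtain ⟨k₁, hk₁, hc₁, hs₁⟩ := hpath.exists_cyclic_sameCycle hf hi hfi
    obtain ⟨k₂, hk₂, hc₂, hs₂⟩ := hpath.exists_cyclic_sameCycle hf hj hfj
    have hns' : ¬ SameCycle E (h k₁) (h k₂) := fun hs => hns (hs₁.trans (hs.trans hs₂.symm))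
    obtain ⟨z₁, p₁, hz₁⟩ := hc₁.exists_isShortestClosedWalk
    obtain ⟨z₂, p₂, hz₂⟩ := hc₂.exists_isShortestClosedWalk
    have hb := hcyc _ z₁ p₁ hz₁.1 hz₁.2.1
    have hc := hcyc _ z₂ p₂ hz₂.1 hz₂.2.1
    refine ⟨_, _, _, hb, hc, cross_ne_of_not_sameCycle lab hdistinct hh hinj hk₁ hk₂ hns'
      hz₁.2.1 hz₂.2.1 hz₁.1 hz₂.1 hb hc, hpath.cover_eq lab hdistinct hk₁ hk₂ hz₁ hz₂ ?_⟩
    intro k hk hck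
    rcases htwo x h nh hh k k₁ k₂ hk hk₁ hk₂ hck hc₁ hc₂ with hs | hs | hs
    · exact .inl hs
    · exact .inr hs
    · exact absurd hs hns'

theorem stmt17 {V T : Type} [Fintype V] (E : V → V → Prop) (r : V)
    (η : V → T) (lab : V → V → ℤ × ℤ)
    -- arcs are labelled by unit directions
    (hlabdir : ∀ u v, E u v → lab u v ∈ Dir)
    -- from the root there is a (unique) path to each vertex
    (hreach : ∀ x : V, ∃ (f : ℕ → V) (n : ℕ), IsWalk E f n r x)
    (huniq : ∀ (x : V) (f g : ℕ → V) (n k : ℕ), IsWalk E f n r x → IsWalk E g k r x →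
      (∀ i j, i ≤ n → j ≤ n → f i = f j → i = j) →
      (∀ i j, i ≤ k → j ≤ k → g i = g j → i = j) →
      n = k ∧ ∀ i ≤ n, f i = g i)
    -- the arc-labels of every rooted walk form a self-avoiding path in ℤ²
    (hsa : ∀ (x : V) (f : ℕ → V) (n : ℕ), IsWalk E f n r x →
      ∀ i j, i ≤ n → j ≤ n → WalkDisp lab f i = WalkDisp lab f j → i = j)
    -- every cycle has a nonzero displacement vector
    (hcyc : ∀ (v : V) (f : ℕ → V) (n : ℕ), 0 < n → IsWalk E f n v v →
      WalkDisp lab f n ≠ 0)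
    -- every rooted walk meets at most two cycles
    (htwo : ∀ (x : V) (f : ℕ → V) (n : ℕ), IsWalk E f n r x →
      ∀ i j k, i ≤ n → j ≤ n → k ≤ n →
        Cyclic E (f i) → Cyclic E (f j) → Cyclic E (f k) →
        SameCycle E (f i) (f j) ∨ SameCycle E (f i) (f k) ∨ SameCycle E (f j) (f k))
    -- distinct rooted walks have distinct displacement vectors
    (hdistinct : ∀ (f g : ℕ → V) (n k : ℕ) (x y : V),
      IsWalk E f n r x → IsWalk E g k r y → WalkDisp lab f n = WalkDisp lab g k →
      n = k ∧ ∀ i ≤ n, f i = g i) :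
    ∀ x : V,
      -- zero cycles met: the cover is a singleton
      ((∀ (f : ℕ → V) (n : ℕ), IsWalk E f n r x → ∀ i ≤ n, ¬ Cyclic E (f i)) →
        ∃ a : ℤ × ℤ, Cover E lab r x = {a}) ∧
      -- exactly one cycle met: the cover is a + ℕ·b
      (((∃ (f : ℕ → V) (n : ℕ), IsWalk E f n r x ∧ ∃ i ≤ n, Cyclic E (f i)) ∧
        (∀ (f : ℕ → V) (n : ℕ), IsWalk E f n r x → ∀ i j, i ≤ n → j ≤ n →
          Cyclic E (f i) → Cyclic E (f j) → SameCycle E (f i) (f j))) →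
        ∃ a b : ℤ × ℤ, b ≠ 0 ∧
          Cover E lab r x = {s | ∃ n : ℕ, s = a + n • b}) ∧
      -- two cycles met: the cover is a + ℕ·b + ℕ·c
      ((∃ (f : ℕ → V) (n : ℕ), IsWalk E f n r x ∧ ∃ i j, i ≤ n ∧ j ≤ n ∧
          Cyclic E (f i) ∧ Cyclic E (f j) ∧ ¬ SameCycle E (f i) (f j)) →
        ∃ a b c : ℤ × ℤ, b ≠ 0 ∧ c ≠ 0 ∧ b.1 * c.2 ≠ b.2 * c.1 ∧
          Cover E lab r x = {s | ∃ mn : ℕ × ℕ, s = a + mn.1 • b + mn.2 • c}) :=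
  stmt17_general E r lab hreach huniq hcyc htwo hdistinct
end
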